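/- arXiv:2210.03268 — 2 statements merged into one kernel-verified Lean document; each statement's English description precedes it below -/
import Mathlib

section
/- The convertibility pre-order induced by type-preserving noncontextual wirings on the set of non-disturbing n-cycle behaviors is not weak: there exist non-disturbing n-cycle behaviors B₁, B₂, B₃ such that B₁ and B₂ are incomparable, B₁ and B₃ are incomparable, and yet B₂ → B₃; hence the incomparability relation is not transitive. -/
open Finset

/-- The outcome value `±1` encoded by a `Bool`. -/
def sval (b : Bool) : ℝ := if b then 1 else -1

/-- An `n`-cycle behavior: for each context `{X_i, X_{i+1}}` (`i ∈ ZMod n`) a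
probability distribution `p i` on pairs of `±1` outcomes (encoded as `Bool`s). -/
def IsNCycleBehavior (n : ℕ) (p : ZMod n → Bool → Bool → ℝ) : Prop :=
  (∀ i a b, 0 ≤ p i a b) ∧ ∀ i : ZMod n, ∑ a : Bool, ∑ b : Bool, p i a b = 1

/-- Non-disturbance: for all `i` and `b`, `Σ_a p_i(a,b) = Σ_c p_{i+1}(b,c)`. -/
def NCycleNonDisturbing (n : ℕ) (p : ZMod n → Bool → Bool → ℝ) : Prop :=
  ∀ (i : ZMod n) (b : Bool), ∑ a : Bool, p i a b = ∑ c : Bool, p (i + 1) b c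

/-- Noncontextuality: existence of a global probability distribution `q` on
`ZMod n → Bool` whose marginals reproduce all the `p i`. -/
def NCycleNoncontextual (n : ℕ) [NeZero n] (p : ZMod n → Bool → Bool → ℝ) : Prop :=
  ∃ q : (ZMod n → Bool) → ℝ, (∀ x, 0 ≤ q x) ∧ (∑ x : ZMod n → Bool, q x = 1) ∧
    ∀ (i : ZMod n) (a b : Bool),
      p i a b = ∑ x : ZMod n → Bool, (if x i = a ∧ x (i + 1) = b then q x else 0)

/-- A sign vector: `γ : ZMod n → {-1, 1}` with an odd number of entries equal to `-1`. -/
def IsSignVector (n : ℕ) (γ : ZMod n → ℝ) : Prop :=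
  (∀ i, γ i = 1 ∨ γ i = -1) ∧ ∃ S : Finset (ZMod n), Odd S.card ∧ ∀ i, γ i = -1 ↔ i ∈ S

/-- The noncontextuality functional `Ω_γ(p) = Σ_i γ(i) ⟨X_i X_{i+1}⟩_p`, where
`⟨X_i X_{i+1}⟩_p = Σ_{a,b} a·b·p_i(a,b)`. -/
noncomputable def OmegaNC (n : ℕ) [NeZero n] (γ : ZMod n → ℝ)
    (p : ZMod n → Bool → Bool → ℝ) : ℝ :=
  ∑ i : ZMod n, γ i * ∑ a : Bool, ∑ b : Bool, sval a * sval b * p i a b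

/-- A type-preserving noncontextual wiring on the `n`-cycle scenario: a finite set `Λ`
(of natural numbers) with a probability distribution `ρ`; a finite set `R` with
pre-processing distributions `q j (·|λ)` on `R`; a context-selection map `g`; and
post-processing distributions `m j (·|r, s, λ)` on `{-1,1}` (encoded as `Bool`). -/
structure NCWiring (n : ℕ) where
  Λ : Finset ℕ
  ρ : ℕ → ℝ
  ρ_nonneg : ∀ l ∈ Λ, 0 ≤ ρ l
  ρ_sum : ∑ l ∈ Λ, ρ l = 1
  R : Finset ℕ
  q : ZMod n → ℕ → ℕ → ℝ
  q_nonneg : ∀ j l r, 0 ≤ q j l r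
  q_sum : ∀ j : ZMod n, ∀ l ∈ Λ, ∑ r ∈ R, q j l r = 1
  g : ZMod n → ℕ → ℕ → ZMod n
  m : ZMod n → ℕ → Bool → ℕ → Bool → ℝ
  m_nonneg : ∀ j r s l t, 0 ≤ m j r s l t
  m_sum : ∀ j r s l, ∑ t : Bool, m j r s l t = 1

/-- The action of a noncontextual wiring on a behavior:
`(W(B))_i(t,t') = Σ_λ ρ(λ) Σ_{r,r'} q_i(r|λ) q_{i+1}(r'|λ)
  Σ_{s,s'} p_{g(i,r,r')}(s,s') m_i(t|r,s,λ) m_{i+1}(t'|r',s',λ)`. -/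
def NCWiring.apply {n : ℕ} (W : NCWiring n) (p : ZMod n → Bool → Bool → ℝ) :
    ZMod n → Bool → Bool → ℝ :=
  fun i t t' => ∑ l ∈ W.Λ, W.ρ l * ∑ r ∈ W.R, ∑ r' ∈ W.R,
    W.q i l r * W.q (i + 1) l r' * ∑ s : Bool, ∑ s' : Bool,
      p (W.g i r r') s s' * W.m i r s l t * W.m (i + 1) r' s' l t'

/-- A wiring is deterministic when every pre-processing distribution `q j (·|λ)` and
every post-processing distribution `m j (·|r,s,λ)` is a point mass. -/
def NCWiring.IsDeterministic {n : ℕ} (W : NCWiring n) : Prop :=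
  (∀ j : ZMod n, ∀ l ∈ W.Λ, ∃ r₀ ∈ W.R, ∀ r ∈ W.R, W.q j l r = if r = r₀ then 1 else 0) ∧
  (∀ (j : ZMod n) (r : ℕ) (s : Bool) (l : ℕ),
    ∃ t₀ : Bool, ∀ t : Bool, W.m j r s l t = if t = t₀ then 1 else 0)

/-- `B → B'`: some type-preserving noncontextual wiring maps `B` to `B'`. -/
def NCConvertsTo (n : ℕ) (B B' : ZMod n → Bool → Bool → ℝ) : Prop :=
  ∃ W : NCWiring n, W.apply B = B'

/-- The PR-like behavior for a sign vector `γ`: `(B_PR)_i(a,b) = (1 + γ(i)·a·b)/4`. -/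
noncomputable def BPR (n : ℕ) (γ : ZMod n → ℝ) : ZMod n → Bool → Bool → ℝ :=
  fun i a b => (1 + γ i * sval a * sval b) / 4

/-- The noisy-PR behavior `B_NPR = ((n-2)/n)·B_PR + (2/n)·B_∅`, where
`B_∅` is the maximally mixed behavior with all probabilities `1/4`. -/
noncomputable def BNPR (n : ℕ) (γ : ZMod n → ℝ) : ZMod n → Bool → Bool → ℝ :=
  fun i a b => (((n : ℝ) - 2) / (n : ℝ)) * BPR n γ i a b + (2 / (n : ℝ)) * (1 / 4)

/-- The interpolating family `F(α) = α·B_PR + (1-α)·B_NPR`. -/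
noncomputable def Fmix (n : ℕ) (γ : ZMod n → ℝ) (α : ℝ) : ZMod n → Bool → Bool → ℝ :=
  fun i a b => α * BPR n γ i a b + (1 - α) * BNPR n γ i a b


set_option maxHeartbeats 1000000

lemma zmod_cycle_ind (n : ℕ) [NeZero n] (P : ZMod n → Prop) (h0 : P 0)
    (hstep : ∀ k, P k → P (k + 1)) : ∀ k, P k := by
  have key : ∀ m : ℕ, P (m : ZMod n) := by
    intro m
    induction m with
    | zero => simpa using h0
    | succ m ih => push_cast; exact hstep _ ih
  intro k
  have := key k.val
  rwa [ZMod.natCast_rightInverse k] at this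

-- product reindex
lemma prod_shift (n : ℕ) [NeZero n] (x : ZMod n → ℝ) :
    ∏ k : ZMod n, x (k + 1) = ∏ k : ZMod n, x k :=
  Fintype.prod_equiv (Equiv.addRight 1) _ _ (fun _ => rfl)

lemma prod_gamma (n : ℕ) [NeZero n] :
    ∏ k : ZMod n, (if k = 0 then (-1:ℝ) else 1) = -1 := by
  rw [Finset.prod_ite_eq' Finset.univ 0 (fun _ => (-1:ℝ))]
  simp

-- term bound: each cycle term is at most the product of abs
lemma tb_aux (u v e : ℝ) (xu xv : ℝ) (he0 : 0 ≤ e) (he1 : e ≤ 1) :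
    xu * xv + e * (u * v) ≤ |xu| * |xv| + |u| * |v| := by
  have h1 : xu * xv ≤ |xu| * |xv| := by
    calc xu * xv ≤ |xu * xv| := le_abs_self _
    _ = |xu| * |xv| := abs_mul _ _
  have h2 : e * (u * v) ≤ |u| * |v| := by
    have : u * v ≤ |u| * |v| := by
      calc u * v ≤ |u * v| := le_abs_self _
      _ = |u| * |v| := abs_mul _ _
    nlinarith [abs_nonneg (u*v), le_abs_self (u*v), neg_abs_le (u*v), abs_mul u v]
  linarith

lemma lemH (n : ℕ) [NeZero n] (hn : 3 ≤ n) (x y e : ZMod n → ℝ)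
    (hxy : ∀ i, |x i| + |y i| ≤ 1) (he0 : ∀ i, 0 ≤ e i) (he1 : ∀ i, e i ≤ 1) :
    ∑ i : ZMod n, (if i = 0 then (-1:ℝ) else 1) *
      (x i * x (i+1) + e i * (y i * y (i+1))) ≤ (n:ℝ) - 1/2 := by
  set γ : ZMod n → ℝ := fun i => if i = 0 then (-1:ℝ) else 1 with hγ
  set T : ZMod n → ℝ := fun i => γ i * (x i * x (i+1) + e i * (y i * y (i+1))) with hT
  have hγ1 : ∀ i, γ i = 1 ∨ γ i = -1 := by
    intro i; by_cases h : i = 0 <;> simp [hγ, h]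
  have tb : ∀ i, T i ≤ |x i| * |x (i+1)| + |y i| * |y (i+1)| := by
    intro i
    have := tb_aux (y i) (y (i+1)) (e i) (x i) (x (i+1)) (he0 i) (he1 i)
    rcases hγ1 i with h | h
    · simp only [hT, h, one_mul]; exact this
    · simp only [hT, h]
      nlinarith [abs_nonneg (x i), abs_nonneg (x (i+1)), abs_nonneg (y i), abs_nonneg (y (i+1)),
        le_abs_self (x i * x (i+1)), neg_abs_le (x i * x (i+1)), abs_mul (x i) (x (i+1)),
        le_abs_self (y i * y (i+1)), neg_abs_le (y i * y (i+1)), abs_mul (y i) (y (i+1)),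
        he0 i, he1 i]
  have T_le_one : ∀ i, T i ≤ 1 := by
    intro i
    have h := tb i
    have h1 := hxy i; have h2 := hxy (i+1)
    nlinarith [abs_nonneg (x i), abs_nonneg (x (i+1)), abs_nonneg (y i), abs_nonneg (y (i+1))]
  -- reduction: enough to find S with deficit ≥ 1/2
  have key : ∀ S : Finset (ZMod n), (1/2 ≤ ∑ i ∈ S, (1 - T i)) →
      ∑ i : ZMod n, T i ≤ (n:ℝ) - 1/2 := by
    intro S hS
    have hsub : ∑ i ∈ S, (1 - T i) ≤ ∑ i : ZMod n, (1 - T i) :=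
      Finset.sum_le_sum_of_subset_of_nonneg (Finset.subset_univ S)
        (fun i _ _ => by linarith [T_le_one i])
    have : ∑ i : ZMod n, (1 - T i) = (n:ℝ) - ∑ i : ZMod n, T i := by
      rw [Finset.sum_sub_distrib]
      simp [Finset.card_univ, ZMod.card n]
    linarith
  have habs : ∀ i, |x i| ≤ 1 ∧ |y i| ≤ 1 := by
    intro i; constructor <;> nlinarith [hxy i, abs_nonneg (x i), abs_nonneg (y i)]
  have hone : (1 : ZMod n) ≠ 0 := by
    haveI : Fact (1 < n) := ⟨by omega⟩
    exact one_ne_zero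
  by_cases hcase : ∃ k, |x k| ≤ 3/4 ∧ |y k| ≤ 3/4
  · obtain ⟨k, hxk, hyk⟩ := hcase
    have hne : k - 1 ≠ k := by
      intro h
      rw [sub_eq_iff_eq_add] at h
      exact hone (left_eq_add.1 h)
    apply key {k - 1, k}
    rw [Finset.sum_pair hne]
    have e1 : k - 1 + 1 = k := by ring
    have b1 : T (k-1) ≤ 3/4 := by
      have := tb (k-1)
      rw [e1] at this
      nlinarith [abs_nonneg (x (k-1)), abs_nonneg (y (k-1)), hxy (k-1), (habs (k-1)).1, (habs (k-1)).2]
    have b2 : T k ≤ 3/4 := by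
      have := tb k
      nlinarith [abs_nonneg (x (k+1)), abs_nonneg (y (k+1)), hxy (k+1), (habs (k+1)).1, (habs (k+1)).2]
    linarith
  · push_neg at hcase
    -- every site is typed
    have htyped : ∀ k, (3/4 < |x k| ∧ |y k| ≤ 1/4) ∨ (3/4 < |y k| ∧ |x k| ≤ 1/4) := by
      intro k
      rcases le_or_gt (|x k|) (3/4) with h | h
      · right
        have := hcase k h
        exact ⟨this, by nlinarith [hxy k, abs_nonneg (x k), abs_nonneg (y k)]⟩
      · left
        exact ⟨h, by nlinarith [hxy k, abs_nonneg (x k), abs_nonneg (y k)]⟩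
    by_cases hcross : ∃ k, (3/4 < |x k| ∧ 3/4 < |y (k+1)|) ∨ (3/4 < |y k| ∧ 3/4 < |x (k+1)|)
    · obtain ⟨k, hk⟩ := hcross
      apply key {k}
      rw [Finset.sum_singleton]
      have hb : T k ≤ 1/2 := by
        rcases hk with ⟨h1, h2⟩ | ⟨h1, h2⟩
        · have hy1 : |y k| ≤ 1/4 := by nlinarith [hxy k, abs_nonneg (x k)]
          have hx2 : |x (k+1)| ≤ 1/4 := by nlinarith [hxy (k+1), abs_nonneg (y (k+1))]
          nlinarith [tb k, abs_nonneg (x k), abs_nonneg (y (k+1)), (habs k).1, (habs (k+1)).2]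
        · have hx1 : |x k| ≤ 1/4 := by nlinarith [hxy k, abs_nonneg (y k)]
          have hy2 : |y (k+1)| ≤ 1/4 := by nlinarith [hxy (k+1), abs_nonneg (x (k+1))]
          nlinarith [tb k, abs_nonneg (y k), abs_nonneg (x (k+1)), (habs k).2, (habs (k+1)).1]
      linarith
    · push_neg at hcross
      -- no cross edges: types propagate
      by_cases hX : 3/4 < |x 0|
      · have allX : ∀ k, 3/4 < |x k| := by
          apply zmod_cycle_ind n (fun k => 3/4 < |x k|) hX
          intro k hk
          rcases htyped (k+1) with ⟨h, _⟩ | ⟨h, _⟩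
          · exact h
          · linarith [(hcross k).1 hk]
        have hysmall : ∀ k, |y k| ≤ 1/4 := by
          intro k; nlinarith [hxy k, allX k, abs_nonneg (y k)]
        -- parity: some edge has γ k * (x k * x (k+1)) < 0
        have hedge : ∃ k, γ k * (x k * x (k+1)) < 0 := by
          by_contra hcon
          push_neg at hcon
          have hprodpos : 0 ≤ ∏ k : ZMod n, (γ k * (x k * x (k+1))) :=
            Finset.prod_nonneg (fun k _ => hcon k)
          have hxne : ∀ k : ZMod n, x k ≠ 0 := by
            intro k h
            have := allX k; rw [h] at this; simp at this; linarith
          have hexp : ∏ k : ZMod n, (γ k * (x k * x (k+1)))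
              = - (∏ k : ZMod n, x k) ^ 2 := by
            rw [Finset.prod_mul_distrib, Finset.prod_mul_distrib, prod_shift n x, hγ, prod_gamma n]
            ring
          have hne : (∏ k : ZMod n, x k) ≠ 0 := Finset.prod_ne_zero_iff.2 (fun k _ => hxne k)
          nlinarith [pow_pos (abs_pos.2 hne) 2, sq_abs (∏ k : ZMod n, x k)]
        obtain ⟨k, hk⟩ := hedge
        apply key {k}
        rw [Finset.sum_singleton]
        have : T k ≤ 1/16 := by
          have hyy : e k * (y k * y (k+1)) ≤ |y k| * |y (k+1)| := by
            nlinarith [le_abs_self (y k * y (k+1)), neg_abs_le (y k * y (k+1)),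
              abs_mul (y k) (y (k+1)), he0 k, he1 k, abs_nonneg (y k * y (k+1))]
          have hyy2 : -(e k * (y k * y (k+1))) ≤ |y k| * |y (k+1)| := by
            nlinarith [le_abs_self (y k * y (k+1)), neg_abs_le (y k * y (k+1)),
              abs_mul (y k) (y (k+1)), he0 k, he1 k, abs_nonneg (y k * y (k+1))]
          have hgval : γ k = 1 ∨ γ k = -1 := by
            rw [hγ]; by_cases h : k = 0 <;> simp [h]
          have hg : γ k * (e k * (y k * y (k+1))) ≤ |y k| * |y (k+1)| := by
            rcases hgval with h | h <;> rw [h] <;> [linarith [hyy]; linarith [hyy2]]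
          have : T k = γ k * (x k * x (k+1)) + γ k * (e k * (y k * y (k+1))) := by
            simp only [hT]; ring
          rw [this]
          nlinarith [hysmall k, hysmall (k+1), abs_nonneg (y k), abs_nonneg (y (k+1))]
        linarith
      · -- Y type at 0
        have hY : 3/4 < |y 0| := by
          rcases htyped 0 with ⟨h, _⟩ | ⟨h, _⟩
          · exact absurd h hX
          · exact h
        have allY : ∀ k, 3/4 < |y k| := by
          apply zmod_cycle_ind n (fun k => 3/4 < |y k|) hY
          intro k hk
          rcases htyped (k+1) with ⟨h, _⟩ | ⟨h, _⟩
          · linarith [(hcross k).2 hk]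
          · exact h
        have hxsmall : ∀ k, |x k| ≤ 1/4 := by
          intro k; nlinarith [hxy k, allY k, abs_nonneg (x k)]
        by_cases h0 : 0 ≤ e 0 * (y 0 * y 1)
        · apply key {0}
          rw [Finset.sum_singleton]
          have : T 0 ≤ 1/16 := by
            have hγ0 : γ 0 = -1 := by rw [hγ]; simp
            have h01 : (0:ZMod n) + 1 = 1 := zero_add 1
            have hT0 : T 0 = -(x 0 * x 1) - e 0 * (y 0 * y 1) := by
              have : T 0 = γ 0 * (x 0 * x (0+1) + e 0 * (y 0 * y (0+1))) := by rw [hT]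
              rw [this, hγ0, h01]; ring
            rw [hT0]
            nlinarith [hxsmall 0, hxsmall 1, abs_nonneg (x 0), abs_nonneg (x 1),
              le_abs_self (x 0 * x 1), neg_abs_le (x 0 * x 1), abs_mul (x 0) (x 1)]
          linarith
        · push_neg at h0
          have hy01 : y 0 * y 1 < 0 := by
            rcases lt_or_ge (y 0 * y 1) 0 with h | h
            · exact h
            · nlinarith [he0 0]
          have hyne : ∀ k : ZMod n, y k ≠ 0 := by
            intro k h
            have := allY k; rw [h] at this; simp at this; linarith
          have hedge : ∃ k, k ≠ 0 ∧ y k * y (k+1) < 0 := by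
            by_contra hcon
            push_neg at hcon
            have hpos : 0 < ∏ k ∈ Finset.univ.erase (0 : ZMod n), (y k * y (k+1)) := by
              apply Finset.prod_pos
              intro k hk
              have hk0 : k ≠ 0 := (Finset.mem_erase.1 hk).1
              have h1 := hcon k hk0
              have h2 : y k * y (k+1) ≠ 0 := mul_ne_zero (hyne k) (hyne (k+1))
              exact lt_of_le_of_ne h1 (Ne.symm h2)
            have hsplit : ∏ k : ZMod n, (y k * y (k+1))
                = (y 0 * y (0+1)) * ∏ k ∈ Finset.univ.erase (0 : ZMod n), (y k * y (k+1)) :=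
              (Finset.mul_prod_erase Finset.univ _ (Finset.mem_univ 0)).symm
            have hsq : ∏ k : ZMod n, (y k * y (k+1)) = (∏ k : ZMod n, y k)^2 := by
              rw [Finset.prod_mul_distrib, prod_shift n y]; ring
            have h01 : (0:ZMod n) + 1 = 1 := by ring
            rw [h01] at hsplit
            nlinarith [sq_nonneg (∏ k : ZMod n, y k)]
          obtain ⟨k, hk0, hk⟩ := hedge
          apply key {k}
          rw [Finset.sum_singleton]
          have : T k ≤ 1/16 := by
            have hTk : T k = x k * x (k+1) + e k * (y k * y (k+1)) := by
              have : T k = γ k * (x k * x (k+1) + e k * (y k * y (k+1))) := by rw [hT]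
              have hγk : γ k = 1 := by rw [hγ]; simp [hk0]
              rw [this, hγk]; ring
            rw [hTk]
            nlinarith [hxsmall k, hxsmall (k+1), abs_nonneg (x k), abs_nonneg (x (k+1)),
              le_abs_self (x k * x (k+1)), abs_mul (x k) (x (k+1)), he0 k,
              mul_nonneg (he0 k) (le_of_lt (neg_pos.2 hk))]
          linarith


lemma marg {n : ℕ} [NeZero n] (R : Finset ℕ) (q : ZMod n → ℕ → ℝ)
    (hq1 : ∀ j, ∑ r ∈ R, q j r = 1) (i i' : ZMod n) (hii : i ≠ i') (G : ℕ → ℕ → ℝ) :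
    ∑ f ∈ Fintype.piFinset (fun _ : ZMod n => R), (∏ j, q j (f j)) * G (f i) (f i')
      = ∑ r ∈ R, ∑ r' ∈ R, q i r * q i' r' * G r r' := by
  set F : ℕ → ℕ → ZMod n → ℕ → ℝ := fun r r' j x => q j x *
    (if j = i then (if x = r then 1 else 0) else
      if j = i' then (if x = r' then 1 else 0) else 1) with hF
  have hprodF : ∀ (r r' : ℕ) (f : ZMod n → ℕ),
      (∏ j, F r r' j (f j)) = (∏ j, q j (f j)) *
        ((if f i = r then 1 else 0) * (if f i' = r' then 1 else 0)) := by
    intro r r' f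
    have : ∀ j, F r r' j (f j) = q j (f j) *
        ((if j = i then (if f i = r then (1:ℝ) else 0) else 1) *
         (if j = i' then (if f i' = r' then (1:ℝ) else 0) else 1)) := by
      intro j
      by_cases h1 : j = i
      · subst h1; rw [if_neg hii]; simp [hF]
      · by_cases h2 : j = i'
        · subst h2; simp [hF, h1]
        · simp [hF, h1, h2]
    rw [Finset.prod_congr rfl (fun j _ => this j)]
    rw [Finset.prod_mul_distrib, Finset.prod_mul_distrib,
      Finset.prod_ite_eq' Finset.univ i (fun _ => if f i = r then (1:ℝ) else 0),
      Finset.prod_ite_eq' Finset.univ i' (fun _ => if f i' = r' then (1:ℝ) else 0)]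
    simp
  have hsumF : ∀ r ∈ R, ∀ r' ∈ R,
      (∑ f ∈ Fintype.piFinset (fun _ : ZMod n => R), ∏ j, F r r' j (f j))
        = q i r * q i' r' := by
    intro r hr r' hr'
    rw [← Finset.prod_univ_sum]
    have heval : ∀ j : ZMod n, (∑ x ∈ R, F r r' j x)
        = (if j = i then q i r else 1) * (if j = i' then q i' r' else 1) := by
      intro j
      by_cases h1 : j = i
      · subst h1
        simp only [hF, if_pos rfl, if_neg hii, if_true, mul_ite, mul_one, mul_zero]
        rw [Finset.sum_ite_eq' R r (fun x => q j x)]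
        simp [hr]
      · by_cases h2 : j = i'
        · subst h2
          simp only [hF, if_neg h1, if_pos rfl, if_true, eq_self_iff_true, mul_ite, mul_one,
            mul_zero]
          rw [Finset.sum_ite_eq' R r' (fun x => q j x)]
          simp [hr']
        · simp only [hF, if_neg h1, if_neg h2, mul_one]
          rw [hq1 j]
    rw [Finset.prod_congr rfl (fun j _ => heval j), Finset.prod_mul_distrib,
      Finset.prod_ite_eq' Finset.univ i (fun _ => q i r),
      Finset.prod_ite_eq' Finset.univ i' (fun _ => q i' r')]
    simp
  have hf : ∀ f ∈ Fintype.piFinset (fun _ : ZMod n => R),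
      (∑ r ∈ R, ∑ r' ∈ R, (∏ j, F r r' j (f j)) * G r r')
        = (∏ j, q j (f j)) * G (f i) (f i') := by
    intro f hf
    have hfi : f i ∈ R := Fintype.mem_piFinset.1 hf i
    have hfi' : f i' ∈ R := Fintype.mem_piFinset.1 hf i'
    rw [Finset.sum_congr rfl (fun r hr => Finset.sum_congr rfl (fun r' hr' => by
      rw [hprodF r r' f]))]
    have step : ∀ r ∈ R, (∑ r' ∈ R, (∏ j, q j (f j)) *
        ((if f i = r then (1:ℝ) else 0) * (if f i' = r' then 1 else 0)) * G r r')
        = (if f i = r then 1 else 0) * ((∏ j, q j (f j)) * G r (f i')) := by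
      intro r hr
      rw [Finset.sum_congr rfl (fun r' _ => by
        rw [show (∏ j, q j (f j)) * ((if f i = r then (1:ℝ) else 0) *
          (if f i' = r' then 1 else 0)) * G r r'
          = (if f i' = r' then (∏ j, q j (f j)) * ((if f i = r then (1:ℝ) else 0)) * G r r'
             else 0) from by by_cases h : f i' = r' <;> simp [h]])]
      rw [Finset.sum_ite_eq R (f i') _]
      by_cases h : f i = r <;> simp [h, hfi']
    rw [Finset.sum_congr rfl step]
    rw [Finset.sum_congr rfl (fun r (_ : r ∈ R) => by
      rw [show (if f i = r then (1:ℝ) else 0) * ((∏ j, q j (f j)) * G r (f i'))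
        = (if f i = r then (∏ j, q j (f j)) * G r (f i') else 0) from by
          by_cases h : f i = r <;> simp [h]])]
    rw [Finset.sum_ite_eq R (f i) _]
    simp [hfi]
  rw [← Finset.sum_congr rfl hf]
  rw [Finset.sum_comm]
  apply Finset.sum_congr rfl
  intro r hr
  rw [Finset.sum_comm]
  apply Finset.sum_congr rfl
  intro r' hr'
  rw [← Finset.sum_mul, hsumF r hr r' hr']

lemma piF_sum_one {n : ℕ} [NeZero n] (R : Finset ℕ) (q : ZMod n → ℕ → ℝ)
    (hq1 : ∀ j, ∑ r ∈ R, q j r = 1) :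
    ∑ f ∈ Fintype.piFinset (fun _ : ZMod n => R), (∏ j, q j (f j)) = 1 := by
  rw [← Finset.prod_univ_sum]
  simp [hq1]

noncomputable def Bone (n : ℕ) : ZMod n → Bool → Bool → ℝ :=
  fun i a b => if i = 0 then 1/4 else (1 + sval a * sval b)/4

noncomputable def Acor {n : ℕ} (W : NCWiring n) (j : ZMod n) (r : ℕ) (s : Bool) (l : ℕ) : ℝ :=
  ∑ t : Bool, sval t * W.m j r s l t

lemma Acor_def {n : ℕ} (W : NCWiring n) (j : ZMod n) (r : ℕ) (s : Bool) (l : ℕ) :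
    Acor W j r s l = W.m j r s l true - W.m j r s l false := by
  simp [Acor, Fintype.sum_bool, sval]; ring

lemma Acor_abs {n : ℕ} (W : NCWiring n) (j : ZMod n) (r : ℕ) (s : Bool) (l : ℕ) :
    |Acor W j r s l| ≤ 1 := by
  have h1 := W.m_nonneg j r s l true
  have h2 := W.m_nonneg j r s l false
  have h3 := W.m_sum j r s l
  rw [Fintype.sum_bool] at h3
  rw [Acor_def]
  rw [abs_le]
  constructor <;> linarith

noncomputable def Xc {n : ℕ} (W : NCWiring n) (j : ZMod n) (r : ℕ) (l : ℕ) : ℝ :=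
  (Acor W j r true l + Acor W j r false l) / 2

noncomputable def Yc {n : ℕ} (W : NCWiring n) (j : ZMod n) (r : ℕ) (l : ℕ) : ℝ :=
  (Acor W j r true l - Acor W j r false l) / 2

lemma XYc_abs {n : ℕ} (W : NCWiring n) (j : ZMod n) (r : ℕ) (l : ℕ) :
    |Xc W j r l| + |Yc W j r l| ≤ 1 := by
  have h1 := Acor_abs W j r true l
  have h2 := Acor_abs W j r false l
  rw [abs_le] at h1 h2
  rw [Xc, Yc]
  rcases abs_cases ((Acor W j r true l + Acor W j r false l) / 2) with ⟨e1, _⟩ | ⟨e1, _⟩ <;>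
    rcases abs_cases ((Acor W j r true l - Acor W j r false l) / 2) with ⟨e2, _⟩ | ⟨e2, _⟩ <;>
    rw [e1, e2] <;> linarith [h1.1, h1.2, h2.1, h2.2]

-- step 2: inner evaluation
lemma inner_eval {n : ℕ} [NeZero n] (W : NCWiring n) (j : ZMod n) (iA iB : ZMod n)
    (r r' l : ℕ) :
    (∑ s : Bool, ∑ s' : Bool, Bone n j s s' * Acor W iA r s l * Acor W iB r' s' l)
      = Xc W iA r l * Xc W iB r' l +
        (if j = 0 then (0:ℝ) else 1) * (Yc W iA r l * Yc W iB r' l) := by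
  by_cases h : j = 0 <;>
    simp only [Bone, Fintype.sum_bool, h, if_pos, if_neg, if_true, ite_true, ite_false,
      Xc, Yc, sval] <;>
    norm_num <;> ring

lemma form {n : ℕ} [NeZero n] (W : NCWiring n) (B : ZMod n → Bool → Bool → ℝ) (i : ZMod n) :
    (∑ t : Bool, ∑ t' : Bool, sval t * sval t' * W.apply B i t t')
      = ∑ l ∈ W.Λ, W.ρ l * ∑ r ∈ W.R, ∑ r' ∈ W.R, W.q i l r * W.q (i+1) l r' *
          (∑ s : Bool, ∑ s' : Bool, B (W.g i r r') s s' *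
            Acor W i r s l * Acor W (i+1) r' s' l) := by
  simp only [NCWiring.apply, Acor, Fintype.sum_bool, Finset.mul_sum, Finset.sum_mul,
    ← Finset.sum_add_distrib]
  refine Finset.sum_congr rfl fun l _ => ?_
  refine Finset.sum_congr rfl fun r _ => ?_
  refine Finset.sum_congr rfl fun r' _ => ?_
  ring


lemma self_ne_add_one {n : ℕ} [NeZero n] (hn : 3 ≤ n) (i : ZMod n) : i ≠ i + 1 := by
  haveI : Fact (1 < n) := ⟨by omega⟩
  intro h
  have : (1 : ZMod n) = 0 := by
    have := (left_eq_add.1 h)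
    exact this
  exact one_ne_zero this

lemma omega_bound {n : ℕ} [NeZero n] (hn : 3 ≤ n) (W : NCWiring n) :
    ∑ i : ZMod n, (if i = 0 then (-1:ℝ) else 1) *
      (∑ t : Bool, ∑ t' : Bool, sval t * sval t' * W.apply (Bone n) i t t')
      ≤ (n:ℝ) - 1/2 := by
  -- rewrite with form and inner_eval
  have hform : ∀ i : ZMod n,
      (∑ t : Bool, ∑ t' : Bool, sval t * sval t' * W.apply (Bone n) i t t')
        = ∑ l ∈ W.Λ, W.ρ l * ∑ r ∈ W.R, ∑ r' ∈ W.R, W.q i l r * W.q (i+1) l r' *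
            (Xc W i r l * Xc W (i+1) r' l +
              (if W.g i r r' = 0 then (0:ℝ) else 1) * (Yc W i r l * Yc W (i+1) r' l)) := by
    intro i
    rw [form]
    refine Finset.sum_congr rfl fun l _ => ?_
    rw [mul_eq_mul_left_iff]
    left
    refine Finset.sum_congr rfl fun r _ => ?_
    refine Finset.sum_congr rfl fun r' _ => ?_
    rw [inner_eval]
  calc ∑ i : ZMod n, (if i = 0 then (-1:ℝ) else 1) *
        (∑ t : Bool, ∑ t' : Bool, sval t * sval t' * W.apply (Bone n) i t t')
      = ∑ l ∈ W.Λ, ∑ i : ZMod n, (if i = 0 then (-1:ℝ) else 1) *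
          (W.ρ l * ∑ r ∈ W.R, ∑ r' ∈ W.R, W.q i l r * W.q (i+1) l r' *
            (Xc W i r l * Xc W (i+1) r' l +
              (if W.g i r r' = 0 then (0:ℝ) else 1) * (Yc W i r l * Yc W (i+1) r' l))) := by
        rw [← Finset.sum_comm]
        refine Finset.sum_congr rfl fun i _ => ?_
        rw [hform i, Finset.mul_sum]
    _ ≤ ∑ l ∈ W.Λ, W.ρ l * ((n:ℝ) - 1/2) := by
        refine Finset.sum_le_sum fun l hl => ?_
        have hq1 : ∀ j : ZMod n, ∑ r ∈ W.R, W.q j l r = 1 := fun j => W.q_sum j l hl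
        -- pull ρ out
        have hfac : ∑ i : ZMod n, (if i = 0 then (-1:ℝ) else 1) *
            (W.ρ l * ∑ r ∈ W.R, ∑ r' ∈ W.R, W.q i l r * W.q (i+1) l r' *
              (Xc W i r l * Xc W (i+1) r' l +
                (if W.g i r r' = 0 then (0:ℝ) else 1) * (Yc W i r l * Yc W (i+1) r' l)))
            = W.ρ l * ∑ i : ZMod n, (if i = 0 then (-1:ℝ) else 1) *
              (∑ r ∈ W.R, ∑ r' ∈ W.R, W.q i l r * W.q (i+1) l r' *
                (Xc W i r l * Xc W (i+1) r' l +
                  (if W.g i r r' = 0 then (0:ℝ) else 1) * (Yc W i r l * Yc W (i+1) r' l))) := by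
          rw [Finset.mul_sum]
          refine Finset.sum_congr rfl fun i _ => ?_
          ring
        rw [hfac]
        have hmarg : ∀ i : ZMod n,
            (∑ r ∈ W.R, ∑ r' ∈ W.R, W.q i l r * W.q (i+1) l r' *
              (Xc W i r l * Xc W (i+1) r' l +
                (if W.g i r r' = 0 then (0:ℝ) else 1) * (Yc W i r l * Yc W (i+1) r' l)))
            = ∑ f ∈ Fintype.piFinset (fun _ : ZMod n => W.R), (∏ j, W.q j l (f j)) *
                (Xc W i (f i) l * Xc W (i+1) (f (i+1)) l +
                  (if W.g i (f i) (f (i+1)) = 0 then (0:ℝ) else 1) *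
                    (Yc W i (f i) l * Yc W (i+1) (f (i+1)) l)) := by
          intro i
          exact (marg W.R (fun j r => W.q j l r) hq1 i (i+1) (self_ne_add_one hn i)
            (fun r r' => Xc W i r l * Xc W (i+1) r' l +
              (if W.g i r r' = 0 then (0:ℝ) else 1) *
                (Yc W i r l * Yc W (i+1) r' l))).symm
        have hswap : ∑ i : ZMod n, (if i = 0 then (-1:ℝ) else 1) *
            (∑ r ∈ W.R, ∑ r' ∈ W.R, W.q i l r * W.q (i+1) l r' *
              (Xc W i r l * Xc W (i+1) r' l +
                (if W.g i r r' = 0 then (0:ℝ) else 1) * (Yc W i r l * Yc W (i+1) r' l)))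
            = ∑ f ∈ Fintype.piFinset (fun _ : ZMod n => W.R), (∏ j, W.q j l (f j)) *
                ∑ i : ZMod n, (if i = 0 then (-1:ℝ) else 1) *
                  (Xc W i (f i) l * Xc W (i+1) (f (i+1)) l +
                    (if W.g i (f i) (f (i+1)) = 0 then (0:ℝ) else 1) *
                      (Yc W i (f i) l * Yc W (i+1) (f (i+1)) l)) := by
          rw [Finset.sum_congr rfl fun i _ => by rw [hmarg i]]
          simp only [Finset.mul_sum]
          rw [Finset.sum_comm]
          refine Finset.sum_congr rfl fun f _ => ?_
          refine Finset.sum_congr rfl fun i _ => ?_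
          ring
        rw [hswap]
        have hbound : ∀ f ∈ Fintype.piFinset (fun _ : ZMod n => W.R),
            (∏ j, W.q j l (f j)) *
              (∑ i : ZMod n, (if i = 0 then (-1:ℝ) else 1) *
                (Xc W i (f i) l * Xc W (i+1) (f (i+1)) l +
                  (if W.g i (f i) (f (i+1)) = 0 then (0:ℝ) else 1) *
                    (Yc W i (f i) l * Yc W (i+1) (f (i+1)) l)))
            ≤ (∏ j, W.q j l (f j)) * ((n:ℝ) - 1/2) := by
          intro f _
          have hq0 : 0 ≤ ∏ j, W.q j l (f j) :=
            Finset.prod_nonneg fun j _ => W.q_nonneg j l (f j)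
          refine mul_le_mul_of_nonneg_left ?_ hq0
          exact lemH n hn (fun i => Xc W i (f i) l) (fun i => Yc W i (f i) l)
            (fun i => if W.g i (f i) (f (i+1)) = 0 then (0:ℝ) else 1)
            (fun i => XYc_abs W i (f i) l)
            (fun i => by by_cases h : W.g i (f i) (f (i+1)) = 0 <;> simp [h])
            (fun i => by by_cases h : W.g i (f i) (f (i+1)) = 0 <;> simp [h])
        refine mul_le_mul_of_nonneg_left ?_ (W.ρ_nonneg l hl)
        refine le_trans (Finset.sum_le_sum hbound) ?_
        rw [← Finset.sum_mul, piF_sum_one W.R (fun j r => W.q j l r) hq1, one_mul]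
    _ = (n:ℝ) - 1/2 := by rw [← Finset.sum_mul, W.ρ_sum, one_mul]

lemma sum_zero_of_nonneg {α : Type*} {S : Finset α} {f : α → ℝ}
    (h0 : ∀ a ∈ S, 0 ≤ f a) (hs : ∑ a ∈ S, f a = 0) : ∀ a ∈ S, f a = 0 :=
  (Finset.sum_eq_zero_iff_of_nonneg h0).1 hs

/-- pinned post-processing at site `j`, hidden var `l`, value `t`. -/
def Apin {n : ℕ} (W : NCWiring n) (l : ℕ) (j : ZMod n) (t : Bool) : Prop :=
  ∀ r ∈ W.R, 0 < W.q j l r → ∀ s : Bool, W.m j r s l t = 1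

lemma supp_nonempty {n : ℕ} (W : NCWiring n) {l : ℕ} (hl : l ∈ W.Λ) (j : ZMod n) :
    ∃ r ∈ W.R, 0 < W.q j l r := by
  by_contra hcon
  push_neg at hcon
  have : ∑ r ∈ W.R, W.q j l r = 0 := by
    apply Finset.sum_eq_zero
    intro r hr
    exact le_antisymm (hcon r hr) (W.q_nonneg j l r)
  rw [W.q_sum j l hl] at this
  norm_num at this

lemma Apin_unique {n : ℕ} (W : NCWiring n) {l : ℕ} (hl : l ∈ W.Λ) {j : ZMod n} {t t' : Bool}
    (h1 : Apin W l j t) (h2 : Apin W l j t') : t = t' := by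
  obtain ⟨r, hr, hq⟩ := supp_nonempty W hl j
  by_contra hne
  have hsum := W.m_sum j r true l
  rw [Fintype.sum_bool] at hsum
  have e1 := h1 r hr hq true
  have e2 := h2 r hr hq true
  cases t <;> cases t' <;> simp_all

lemma rigidity {n : ℕ} [NeZero n] (hn : 3 ≤ n) (W : NCWiring n)
    (B : ZMod n → Bool → Bool → ℝ) (hpos : ∀ j s s', 0 < B j s s') :
    W.apply B ≠ Bone n := by
  intro h
  -- zero off-diagonal conditions on contexts i ≠ 0
  have hmm : ∀ (i : ZMod n), i ≠ 0 → ∀ (t t' : Bool), t ≠ t' →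
      ∀ l ∈ W.Λ, 0 < W.ρ l → ∀ r ∈ W.R, 0 < W.q i l r → ∀ r' ∈ W.R, 0 < W.q (i+1) l r' →
      ∀ s s' : Bool, W.m i r s l t * W.m (i+1) r' s' l t' = 0 := by
    intro i hi t t' htt l hl hρ r hr hqr r' hr' hqr' s s'
    have happ : W.apply B i t t' = 0 := by
      rw [h]
      have : sval t * sval t' = -1 := by cases t <;> cases t' <;> simp_all [sval]
      simp [Bone, if_neg hi, this]
    rw [NCWiring.apply] at happ
    have step1 := sum_zero_of_nonneg (f := fun l => W.ρ l * ∑ r ∈ W.R, ∑ r' ∈ W.R,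
        W.q i l r * W.q (i + 1) l r' * ∑ s : Bool, ∑ s' : Bool,
          B (W.g i r r') s s' * W.m i r s l t * W.m (i + 1) r' s' l t')
      (fun a ha => by
        apply mul_nonneg (W.ρ_nonneg a ha)
        apply Finset.sum_nonneg; intro u _; apply Finset.sum_nonneg; intro u' _
        apply mul_nonneg (mul_nonneg (W.q_nonneg _ _ _) (W.q_nonneg _ _ _))
        apply Finset.sum_nonneg; intro v _; apply Finset.sum_nonneg; intro v' _
        exact mul_nonneg (mul_nonneg (le_of_lt (hpos _ _ _)) (W.m_nonneg _ _ _ _ _))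
          (W.m_nonneg _ _ _ _ _)) happ l hl
    have hinner : (∑ r ∈ W.R, ∑ r' ∈ W.R, W.q i l r * W.q (i + 1) l r' *
        ∑ s : Bool, ∑ s' : Bool,
          B (W.g i r r') s s' * W.m i r s l t * W.m (i + 1) r' s' l t') = 0 := by
      rcases mul_eq_zero.1 step1 with h' | h'
      · exact absurd h' (ne_of_gt hρ)
      · exact h'
    have step2 := sum_zero_of_nonneg (f := fun r => ∑ r' ∈ W.R,
        W.q i l r * W.q (i + 1) l r' * ∑ s : Bool, ∑ s' : Bool,
          B (W.g i r r') s s' * W.m i r s l t * W.m (i + 1) r' s' l t')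
      (fun a _ => by
        apply Finset.sum_nonneg; intro u' _
        apply mul_nonneg (mul_nonneg (W.q_nonneg _ _ _) (W.q_nonneg _ _ _))
        apply Finset.sum_nonneg; intro v _; apply Finset.sum_nonneg; intro v' _
        exact mul_nonneg (mul_nonneg (le_of_lt (hpos _ _ _)) (W.m_nonneg _ _ _ _ _))
          (W.m_nonneg _ _ _ _ _)) hinner r hr
    have step3 := sum_zero_of_nonneg (f := fun r' =>
        W.q i l r * W.q (i + 1) l r' * ∑ s : Bool, ∑ s' : Bool,
          B (W.g i r r') s s' * W.m i r s l t * W.m (i + 1) r' s' l t')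
      (fun a _ => by
        apply mul_nonneg (mul_nonneg (W.q_nonneg _ _ _) (W.q_nonneg _ _ _))
        apply Finset.sum_nonneg; intro v _; apply Finset.sum_nonneg; intro v' _
        exact mul_nonneg (mul_nonneg (le_of_lt (hpos _ _ _)) (W.m_nonneg _ _ _ _ _))
          (W.m_nonneg _ _ _ _ _)) step2 r' hr'
    have hss : (∑ s : Bool, ∑ s' : Bool,
        B (W.g i r r') s s' * W.m i r s l t * W.m (i + 1) r' s' l t') = 0 := by
      rcases mul_eq_zero.1 step3 with h' | h'
      · exact absurd h' (ne_of_gt (mul_pos hqr hqr'))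
      · exact h'
    have step4 := sum_zero_of_nonneg (f := fun s => ∑ s' : Bool,
        B (W.g i r r') s s' * W.m i r s l t * W.m (i + 1) r' s' l t')
      (fun a _ => by
        apply Finset.sum_nonneg; intro v' _
        exact mul_nonneg (mul_nonneg (le_of_lt (hpos _ _ _)) (W.m_nonneg _ _ _ _ _))
          (W.m_nonneg _ _ _ _ _)) hss s (Finset.mem_univ s)
    have step5 := sum_zero_of_nonneg (f := fun s' =>
        B (W.g i r r') s s' * W.m i r s l t * W.m (i + 1) r' s' l t')
      (fun a _ => mul_nonneg (mul_nonneg (le_of_lt (hpos _ _ _)) (W.m_nonneg _ _ _ _ _))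
          (W.m_nonneg _ _ _ _ _)) step4 s' (Finset.mem_univ s')
    have := mul_eq_zero.1 step5
    rcases this with h' | h'
    · rcases mul_eq_zero.1 h' with h'' | h''
      · exact absurd h'' (ne_of_gt (hpos _ _ _))
      · rw [h'', zero_mul]
    · rw [h', mul_zero]
  -- pinned structure on each edge i ≠ 0
  have hedge : ∀ l ∈ W.Λ, 0 < W.ρ l → ∀ (i : ZMod n), i ≠ 0 →
      ∃ t : Bool, Apin W l i t ∧ Apin W l (i+1) t := by
    intro l hl hρ i hi
    obtain ⟨r₀, hr₀, hq₀⟩ := supp_nonempty W hl i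
    obtain ⟨r₀', hr₀', hq₀'⟩ := supp_nonempty W hl (i+1)
    -- for a fixed pair of supported (r, r'), get the pinned value
    have pair : ∀ r ∈ W.R, 0 < W.q i l r → ∀ r' ∈ W.R, 0 < W.q (i+1) l r' →
        ∃ t : Bool, (∀ s, W.m i r s l t = 1) ∧ (∀ s', W.m (i+1) r' s' l t = 1) := by
      intro r hr hqr r' hr' hqr'
      have hsum : ∀ (j : ZMod n) (rr : ℕ) (s : Bool),
          W.m j rr s l true + W.m j rr s l false = 1 := by
        intro j rr s
        have := W.m_sum j rr s l
        rwa [Fintype.sum_bool] at this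
      have hTF := hmm i hi true false (by simp) l hl hρ r hr hqr r' hr' hqr'
      have hFT := hmm i hi false true (by simp) l hl hρ r hr hqr r' hr' hqr'
      rcases lt_or_ge 0 (W.m i r true l true) with hT | hT
      · refine ⟨true, ?_, ?_⟩
        · intro s
          have h2 : ∀ s', W.m (i+1) r' s' l true = 1 := by
            intro s'
            have := hTF true s'
            rcases mul_eq_zero.1 this with h' | h'
            · exact absurd h' (ne_of_gt hT)
            · linarith [hsum (i+1) r' s']
          have := hFT s true
          rcases mul_eq_zero.1 this with h' | h'
          · linarith [hsum i r s]
          · exact absurd h' (by rw [h2 true]; norm_num)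
        · intro s'
          have := hTF true s'
          rcases mul_eq_zero.1 this with h' | h'
          · exact absurd h' (ne_of_gt hT)
          · linarith [hsum (i+1) r' s']
      · -- m i r true l true = 0, so m i r true l false = 1 > 0
        have hF : 0 < W.m i r true l false := by
          have := hsum i r true
          have := W.m_nonneg i r true l true
          nlinarith [W.m_nonneg i r true l false]
        refine ⟨false, ?_, ?_⟩
        · intro s
          have h2 : ∀ s', W.m (i+1) r' s' l false = 1 := by
            intro s'
            have := hFT true s'
            rcases mul_eq_zero.1 this with h' | h'
            · exact absurd h' (ne_of_gt hF)
            · linarith [hsum (i+1) r' s']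
          have := hTF s true
          rcases mul_eq_zero.1 this with h' | h'
          · linarith [hsum i r s]
          · exact absurd h' (by rw [h2 true]; norm_num)
        · intro s'
          have := hFT true s'
          rcases mul_eq_zero.1 this with h' | h'
          · exact absurd h' (ne_of_gt hF)
          · linarith [hsum (i+1) r' s']
    obtain ⟨t, ht1, ht2⟩ := pair r₀ hr₀ hq₀ r₀' hr₀' hq₀'
    refine ⟨t, ?_, ?_⟩
    · intro r hr hqr s
      obtain ⟨t', ht1', ht2'⟩ := pair r hr hqr r₀' hr₀' hq₀'
      have : t' = t := by
        by_contra hne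
        have e1 := ht2 true
        have e2 := ht2' true
        have hsum := W.m_sum (i+1) r₀' true l
        rw [Fintype.sum_bool] at hsum
        cases t <;> cases t' <;> simp_all
      rw [← this]
      exact ht1' s
    · intro r' hr' hqr' s'
      obtain ⟨t', ht1', ht2'⟩ := pair r₀ hr₀ hq₀ r' hr' hqr'
      have : t' = t := by
        by_contra hne
        have e1 := ht1 true
        have e2 := ht1' true
        have hsum := W.m_sum i r₀ true l
        rw [Fintype.sum_bool] at hsum
        cases t <;> cases t' <;> simp_all
      rw [← this]
      exact ht2' s'
  -- chain the pinned values around the cycle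
  have hchain : ∀ l ∈ W.Λ, 0 < W.ρ l → ∃ t : Bool, Apin W l 1 t ∧ Apin W l 0 t := by
    intro l hl hρ
    have hstep : ∀ k : ℕ, k ≤ n - 1 → ∃ t : Bool, Apin W l 1 t ∧ Apin W l ((1 + k : ℕ) : ZMod n) t := by
      intro k
      induction k with
      | zero =>
        intro _
        obtain ⟨t, h1, _⟩ := hedge l hl hρ 1 (by
          haveI : Fact (1 < n) := ⟨by omega⟩
          exact one_ne_zero)
        exact ⟨t, h1, by simpa using h1⟩
      | succ k ih =>
        intro hk
        obtain ⟨t, h1, hk'⟩ := ih (by omega)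
        have hne : ((1 + k : ℕ) : ZMod n) ≠ 0 := by
          rw [Ne, ZMod.natCast_eq_zero_iff]
          intro hdvd
          have := Nat.le_of_dvd (by omega) hdvd
          omega
        obtain ⟨t', h1', h2'⟩ := hedge l hl hρ ((1 + k : ℕ) : ZMod n) hne
        have : t' = t := Apin_unique W hl h1' hk'
        subst this
        refine ⟨t', h1, ?_⟩
        have : ((1 + (k+1) : ℕ) : ZMod n) = ((1 + k : ℕ) : ZMod n) + 1 := by push_cast; ring
        rw [this]
        exact h2'
    obtain ⟨t, h1, h0⟩ := hstep (n - 1) le_rfl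
    refine ⟨t, h1, ?_⟩
    have : ((1 + (n - 1) : ℕ) : ZMod n) = 0 := by
      have : (1 + (n - 1) : ℕ) = n := by omega
      rw [this, ZMod.natCast_self]
    rwa [this] at h0
  -- contradiction at context 0
  have hfinal : W.apply B 0 true false = Bone n 0 true false := by rw [h]
  have hB0 : Bone n 0 true false = 1/4 := by simp [Bone]
  rw [hB0, NCWiring.apply] at hfinal
  have hzero : (∑ l ∈ W.Λ, W.ρ l * ∑ r ∈ W.R, ∑ r' ∈ W.R,
      W.q 0 l r * W.q (0 + 1) l r' * ∑ s : Bool, ∑ s' : Bool,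
        B (W.g 0 r r') s s' * W.m 0 r s l true * W.m (0 + 1) r' s' l false) = 0 := by
    apply Finset.sum_eq_zero
    intro l hl
    rcases le_or_gt (W.ρ l) 0 with hρ | hρ
    · have : W.ρ l = 0 := le_antisymm hρ (W.ρ_nonneg l hl)
      rw [this, zero_mul]
    · obtain ⟨t, h1, h0⟩ := hchain l hl hρ
      have hsum1 : ∀ (j : ZMod n) (rr : ℕ) (s : Bool),
          W.m j rr s l true + W.m j rr s l false = 1 := by
        intro j rr s
        have := W.m_sum j rr s l
        rwa [Fintype.sum_bool] at this
      have hinner : ∀ r ∈ W.R, ∀ r' ∈ W.R,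
          (W.q 0 l r * W.q (0 + 1) l r' * ∑ s : Bool, ∑ s' : Bool,
            B (W.g 0 r r') s s' * W.m 0 r s l true * W.m (0 + 1) r' s' l false) = 0 := by
        intro r hr r' hr'
        rcases le_or_gt (W.q 0 l r) 0 with hq | hq
        · have : W.q 0 l r = 0 := le_antisymm hq (W.q_nonneg 0 l r)
          rw [this, zero_mul, zero_mul]
        rcases le_or_gt (W.q (0+1) l r') 0 with hq' | hq'
        · have : W.q (0+1) l r' = 0 := le_antisymm hq' (W.q_nonneg (0+1) l r')
          rw [this, mul_zero, zero_mul]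
        have : (∑ s : Bool, ∑ s' : Bool,
            B (W.g 0 r r') s s' * W.m 0 r s l true * W.m (0 + 1) r' s' l false) = 0 := by
          apply Finset.sum_eq_zero
          intro s _
          apply Finset.sum_eq_zero
          intro s' _
          cases t
          · -- t = false : m 0 r s l true = 0
            have := h0 r hr hq s
            have hz : W.m 0 r s l true = 0 := by linarith [hsum1 0 r s]
            rw [hz, mul_zero, zero_mul]
          · -- t = true : m 1 r' s' l false = 0
            have h1' : W.m (0+1) r' s' l true = 1 := by
              have : (0 : ZMod n) + 1 = 1 := by ring
              rw [this]
              exact h1 r' hr' (by rwa [← this]) s'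
            have hz : W.m (0+1) r' s' l false = 0 := by linarith [hsum1 (0+1) r' s']
            rw [hz, mul_zero]
        rw [this, mul_zero]
      apply mul_eq_zero_of_right
      apply Finset.sum_eq_zero
      intro r hr
      apply Finset.sum_eq_zero
      intro r' hr'
      exact hinner r hr r' hr'
  rw [hzero] at hfinal
  norm_num at hfinal

noncomputable def vB (n : ℕ) (c : ℝ) : ZMod n → Bool → Bool → ℝ :=
  fun i a b => (1 + c * (if i = 0 then -1 else 1) * sval a * sval b)/4

lemma vB_behavior (n : ℕ) (c : ℝ) (hc0 : -1 ≤ c) (hc1 : c ≤ 1) :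
    IsNCycleBehavior n (vB n c) := by
  constructor
  · intro i a b
    by_cases h : i = 0 <;> cases a <;> cases b <;>
      simp [vB, sval, h] <;> linarith
  · intro i
    by_cases h : i = 0 <;> simp [vB, sval, Fintype.sum_bool, h] <;> ring

lemma vB_nondisturbing (n : ℕ) (c : ℝ) : NCycleNonDisturbing n (vB n c) := by
  intro i b
  have e1 : ∑ a : Bool, vB n c i a b = 1/2 := by
    by_cases h : i = 0 <;> cases b <;> simp [vB, sval, Fintype.sum_bool, h] <;> ring
  have e2 : ∑ d : Bool, vB n c (i+1) b d = 1/2 := by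
    by_cases h : i + 1 = 0 <;> cases b <;> simp [vB, sval, Fintype.sum_bool, h] <;> ring
  rw [e1, e2]

lemma vB_pos (n : ℕ) (c : ℝ) (hc0 : -1 < c) (hc1 : c < 1) :
    ∀ (j : ZMod n) (s s' : Bool), 0 < vB n c j s s' := by
  intro j s s'
  by_cases h : j = 0 <;> cases s <;> cases s' <;>
    simp [vB, sval, h] <;> linarith

lemma Bone_behavior (n : ℕ) : IsNCycleBehavior n (Bone n) := by
  constructor
  · intro i a b
    by_cases h : i = 0 <;> cases a <;> cases b <;>
      simp [Bone, sval, h] <;> linarith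
  · intro i
    by_cases h : i = 0 <;> simp [Bone, sval, Fintype.sum_bool, h] <;> ring

lemma Bone_nondisturbing (n : ℕ) : NCycleNonDisturbing n (Bone n) := by
  intro i b
  have e1 : ∑ a : Bool, Bone n i a b = 1/2 := by
    by_cases h : i = 0 <;> cases b <;> simp [Bone, sval, Fintype.sum_bool, h] <;> ring
  have e2 : ∑ c : Bool, Bone n (i+1) b c = 1/2 := by
    by_cases h : i + 1 = 0 <;> cases b <;> simp [Bone, sval, Fintype.sum_bool, h] <;> ring
  rw [e1, e2]

lemma phi_vB (n : ℕ) [NeZero n] (c : ℝ) :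
    ∑ i : ZMod n, (if i = 0 then (-1:ℝ) else 1) *
      (∑ t : Bool, ∑ t' : Bool, sval t * sval t' * vB n c i t t') = n * c := by
  have : ∀ i : ZMod n, (if i = 0 then (-1:ℝ) else 1) *
      (∑ t : Bool, ∑ t' : Bool, sval t * sval t' * vB n c i t t') = c := by
    intro i
    by_cases h : i = 0 <;> simp [vB, sval, Fintype.sum_bool, h] <;> ring
  rw [Finset.sum_congr rfl fun i _ => this i, Finset.sum_const, Finset.card_univ,
    ZMod.card n, nsmul_eq_mul]

/-- the mixing wiring sending `vB n a` to `vB n (c·a)`. -/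
noncomputable def Wmix (n : ℕ) (c : ℝ) (h0 : 0 ≤ c) (h1 : c ≤ 1) : NCWiring n where
  Λ := {0, 1}
  ρ := fun l => if l = 0 then c else 1 - c
  ρ_nonneg := fun l _ => by by_cases h : l = 0 <;> simp [h] <;> linarith
  ρ_sum := by rw [Finset.sum_pair (by norm_num : (0:ℕ) ≠ 1)]; norm_num
  R := {0}
  q := fun _ _ _ => 1
  q_nonneg := fun _ _ _ => zero_le_one
  q_sum := fun _ _ _ => by simp
  g := fun i _ _ => i
  m := fun j r s l t => if l = 0 then (if t = s then 1 else 0) else 1/2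
  m_nonneg := by
    intro j r s l t
    by_cases h : l = 0 <;> by_cases h' : t = s <;> simp [h, h'] <;> norm_num
  m_sum := by
    intro j r s l
    by_cases h : l = 0 <;> cases s <;> simp [Fintype.sum_bool, h] <;> norm_num

lemma Wmix_apply (n : ℕ) [NeZero n] (c a : ℝ) (hc0 : 0 ≤ c) (hc1 : c ≤ 1) :
    (Wmix n c hc0 hc1).apply (vB n a) = vB n (c * a) := by
  funext i t t'
  rw [NCWiring.apply]
  show (∑ l ∈ ({0,1} : Finset ℕ), _) = _
  rw [Finset.sum_pair (by norm_num : (0:ℕ) ≠ 1)]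
  simp only [Wmix, Finset.sum_singleton, Fintype.sum_bool]
  by_cases h : i = 0 <;> cases t <;> cases t' <;>
    simp [vB, sval, h] <;> ring

/-- the convertibility pre-order induced by type-preserving
noncontextual wirings on non-disturbing `n`-cycle behaviors is not weak: there are
non-disturbing behaviors `B₁, B₂, B₃` with `B₁, B₂` incomparable, `B₁, B₃`
incomparable, and yet `B₂ → B₃`; hence incomparability is not transitive. -/
theorem preorder_not_weak (n : ℕ) [NeZero n] (hn : 3 ≤ n) :
    ∃ B₁ B₂ B₃ : ZMod n → Bool → Bool → ℝ,
      IsNCycleBehavior n B₁ ∧ NCycleNonDisturbing n B₁ ∧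
      IsNCycleBehavior n B₂ ∧ NCycleNonDisturbing n B₂ ∧
      IsNCycleBehavior n B₃ ∧ NCycleNonDisturbing n B₃ ∧
      (¬ NCConvertsTo n B₁ B₂ ∧ ¬ NCConvertsTo n B₂ B₁) ∧
      (¬ NCConvertsTo n B₁ B₃ ∧ ¬ NCConvertsTo n B₃ B₁) ∧
      NCConvertsTo n B₂ B₃ := by
  have hn3 : (3:ℝ) ≤ (n:ℝ) := by exact_mod_cast hn
  have hnpos : (0:ℝ) < n := by linarith
  have hne : (n:ℝ) ≠ 0 := ne_of_gt hnpos
  set a : ℝ := 1 - 1/(4*(n:ℝ)) with ha_def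
  set b : ℝ := 1 - 3/(8*(n:ℝ)) with hb_def
  have e2 : 0 < 1/(4*(n:ℝ)) := by positivity
  have e1 : 1/(4*(n:ℝ)) ≤ 1/12 := by
    rw [div_le_div_iff₀ (by linarith) (by norm_num)]
    linarith
  have e4 : 0 < 3/(8*(n:ℝ)) := by positivity
  have e3 : 3/(8*(n:ℝ)) ≤ 1/8 := by
    rw [div_le_div_iff₀ (by linarith) (by norm_num)]
    linarith
  have e5 : 1/(4*(n:ℝ)) ≤ 3/(8*(n:ℝ)) := by
    rw [div_le_div_iff₀ (by linarith) (by linarith)]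
    nlinarith
  have ha0 : 0 < a := by rw [ha_def]; linarith
  have ha1 : a < 1 := by rw [ha_def]; linarith
  have hb0 : 0 < b := by rw [hb_def]; linarith
  have hb1 : b < 1 := by rw [hb_def]; linarith
  have hba : b ≤ a := by rw [ha_def, hb_def]; linarith
  have hna : (n:ℝ) * a = n - 1/4 := by
    rw [ha_def]; field_simp
  have hnb : (n:ℝ) * b = n - 3/8 := by
    rw [hb_def]; field_simp
  refine ⟨Bone n, vB n a, vB n b,
    Bone_behavior n, Bone_nondisturbing n,
    vB_behavior n a (by linarith) (by linarith), vB_nondisturbing n a,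
    vB_behavior n b (by linarith) (by linarith), vB_nondisturbing n b,
    ⟨?_, ?_⟩, ⟨?_, ?_⟩, ?_⟩
  · rintro ⟨W, hW⟩
    have hbnd := omega_bound hn W
    rw [hW, phi_vB] at hbnd
    linarith
  · rintro ⟨W, hW⟩
    exact rigidity hn W _ (vB_pos n a (by linarith) ha1) hW
  · rintro ⟨W, hW⟩
    have hbnd := omega_bound hn W
    rw [hW, phi_vB] at hbnd
    linarith
  · rintro ⟨W, hW⟩
    exact rigidity hn W _ (vB_pos n b (by linarith) hb1) hW
  · have hc0 : 0 ≤ b/a := div_nonneg (le_of_lt hb0) (le_of_lt ha0)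
    have hc1 : b/a ≤ 1 := (div_le_one ha0).2 hba
    refine ⟨Wmix n (b/a) hc0 hc1, ?_⟩
    rw [Wmix_apply n (b/a) a hc0 hc1, div_mul_cancel₀ b (ne_of_gt ha0)]
end

section
/- The convertibility pre-order induced by type-preserving noncontextual wirings on the set of non-disturbing n-cycle behaviors has infinite width: there exists an infinite antichain, i.e., an injective family (B_x)_{x ∈ [1/2, 1]} of non-disturbing n-cycle behaviors such that for all x ≠ y, B_x and B_y are incomparable (neither B_x → B_y nor B_y → B_x). -/
open Finset

namespace PWAux
set_option linter.unusedSectionVars false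

noncomputable def gam (n : ℕ) (i : ZMod n) : ℝ := if i = 0 then -1 else 1
noncomputable def uu (n : ℕ) (a b : ℝ) (i : ZMod n) : ℝ := if i = 0 then a else b
noncomputable def ww (n : ℕ) (a b : ℝ) (i : ZMod n) : ℝ := gam n i * uu n a b i
noncomputable def ell (n : ℕ) (t : ℝ) (i : ZMod n) : ℝ := if i = 0 then t else 1

/-- The behavior with uniform marginals and correlators `gam i * uu i`. -/
noncomputable def Pab (n : ℕ) (a b : ℝ) : ZMod n → Bool → Bool → ℝ :=
  fun i s s' => (1 + ww n a b i * sval s * sval s') / 4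

/-- Correlator of edge `i`. -/
noncomputable def cor (n : ℕ) (p : ZMod n → Bool → Bool → ℝ) (i : ZMod n) : ℝ :=
  ∑ s : Bool, ∑ s' : Bool, sval s * sval s' * p i s s'

section Basic

lemma sval_cases (s : Bool) : sval s = 1 ∨ sval s = -1 := by
  cases s <;> simp [sval]

lemma sval_sq (s : Bool) : sval s * sval s = 1 := by
  cases s <;> norm_num [sval]

variable {n : ℕ} [NeZero n]

lemma gam_cases (i : ZMod n) : gam n i = 1 ∨ gam n i = -1 := by
  unfold gam; by_cases h : i = 0 <;> simp [h]

lemma gam_sq (i : ZMod n) : gam n i * gam n i = 1 := by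
  rcases gam_cases (n := n) i with h | h <;> rw [h] <;> norm_num

lemma gam_eq_neg_one_iff (i : ZMod n) : gam n i = -1 ↔ i = 0 := by
  unfold gam; by_cases h : i = 0
  · simp [h]
  · simp only [h, iff_false, if_false]
    norm_num

lemma prod_gam : ∏ i : ZMod n, gam n i = -1 := by
  unfold gam
  rw [Finset.prod_ite_eq' Finset.univ (0 : ZMod n) (fun _ => (-1 : ℝ))]
  simp

variable (hn : 3 ≤ n)
include hn

lemma one_ne_zero' : (1 : ZMod n) ≠ 0 := by
  have h1 : Fact (1 < n) := ⟨by omega⟩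
  intro h
  have := congrArg ZMod.val h
  rw [ZMod.val_one n, ZMod.val_zero] at this
  exact one_ne_zero this

lemma succ_ne (i : ZMod n) : i + 1 ≠ i := by
  intro h
  have : (1 : ZMod n) = 0 := by
    have := congrArg (fun z => z - i) h
    simpa [add_comm, add_sub_cancel_right] using this
  exact one_ne_zero' hn this

lemma card_zmod : (Fintype.card (ZMod n) : ℝ) = (n : ℝ) := by
  rw [ZMod.card]

omit hn

/-- cyclic propagation -/
lemma cyc (P : ZMod n → Prop) (h : ∀ j, P j → P (j + 1)) {i : ZMod n} (hi : P i)
    (j : ZMod n) : P j := by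
  have key : ∀ k : ℕ, P (i + (k : ZMod n)) := by
    intro k
    induction k with
    | zero => simpa using hi
    | succ k ih =>
      have : ((k + 1 : ℕ) : ZMod n) = (k : ZMod n) + 1 := by push_cast; ring
      rw [this, ← add_assoc]
      exact h _ ih
  have hv : (((j - i).val : ℕ) : ZMod n) = j - i := ZMod.natCast_rightInverse (j - i)
  have := key (j - i).val
  rwa [hv, add_sub_cancel] at this

end Basic

end PWAux
namespace PWAux
section Marg

variable {n : ℕ} [NeZero n] {κ : Type} [DecidableEq κ]

lemma piFinset_filter (t : ZMod n → Finset κ) (i : ZMod n) (r : κ) (hr : r ∈ t i) :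
    (Fintype.piFinset t).filter (fun p => p i = r)
      = Fintype.piFinset (Function.update t i {r}) := by
  ext p
  simp only [Finset.mem_filter, Fintype.mem_piFinset]
  constructor
  · rintro ⟨hp, hpi⟩ j
    rcases eq_or_ne j i with rfl | hj
    · simp [Function.update_self, hpi]
    · simpa [Function.update_of_ne hj] using hp j
  · intro hp
    constructor
    · intro j
      rcases eq_or_ne j i with rfl | hj
      · have := hp j; rw [Function.update_self] at this
        simp only [Finset.mem_singleton] at this
        rw [this]; exact hr
      · have := hp j; rwa [Function.update_of_ne hj] at this
    · have := hp i; rw [Function.update_self] at this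
      simpa using this

lemma marg (t : ZMod n → Finset κ) (w : ZMod n → κ → ℝ)
    (hw1 : ∀ j, ∑ r ∈ t j, w j r = 1) {i i' : ZMod n} (hii : i ≠ i') (X : κ → κ → ℝ) :
    ∑ p ∈ Fintype.piFinset t, (∏ j, w j (p j)) * X (p i) (p i')
      = ∑ r ∈ t i, ∑ r' ∈ t i', w i r * w i' r' * X r r' := by
  classical
  rw [← Finset.sum_fiberwise_of_maps_to (g := fun p => p i) (t := t i)
      (fun p hp => (Fintype.mem_piFinset.mp hp) i)]
  refine Finset.sum_congr rfl fun r hr => ?_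
  rw [piFinset_filter t i r hr]
  rw [← Finset.sum_fiberwise_of_maps_to (g := fun p => p i') (t := t i')
      (fun p hp => by
        have := (Fintype.mem_piFinset.mp hp) i'
        rwa [Function.update_of_ne (Ne.symm hii)] at this)]
  refine Finset.sum_congr rfl fun r' hr' => ?_
  rw [piFinset_filter _ i' r' (by rw [Function.update_of_ne (Ne.symm hii)]; exact hr')]
  have hval : ∀ p ∈ Fintype.piFinset (Function.update (Function.update t i {r}) i' {r'}),
      p i = r ∧ p i' = r' := by
    intro p hp
    have h1 := (Fintype.mem_piFinset.mp hp) i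
    have h2 := (Fintype.mem_piFinset.mp hp) i'
    rw [Function.update_of_ne hii, Function.update_self] at h1
    rw [Function.update_self] at h2
    exact ⟨by simpa using h1, by simpa using h2⟩
  rw [Finset.sum_congr rfl (fun p hp => by rw [(hval p hp).1, (hval p hp).2])]
  rw [← Finset.sum_mul, ← Finset.prod_univ_sum]
  have hprod : ∏ j : ZMod n, (∑ x ∈ Function.update (Function.update t i {r}) i' {r'} j, w j x)
      = w i r * w i' r' := by
    have hfac : ∀ j : ZMod n, (∑ x ∈ Function.update (Function.update t i {r}) i' {r'} j, w j x)
        = (if j = i then w i r else 1) * (if j = i' then w i' r' else 1) := by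
      intro j
      rcases eq_or_ne j i with rfl | hj
      · rw [Function.update_of_ne hii, Function.update_self]
        simp [hii]
      · rcases eq_or_ne j i' with rfl | hj'
        · rw [Function.update_self]
          simp [hj]
        · rw [Function.update_of_ne hj', Function.update_of_ne hj]
          simp [hj, hj', hw1 j]
    rw [Finset.prod_congr rfl (fun j _ => hfac j), Finset.prod_mul_distrib]
    rw [Finset.prod_ite_eq' Finset.univ i (fun _ => w i r),
        Finset.prod_ite_eq' Finset.univ i' (fun _ => w i' r')]
    simp
  rw [hprod]

lemma sum_piFinset_prod_eq_one (t : ZMod n → Finset κ) (w : ZMod n → κ → ℝ)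
    (hw1 : ∀ j, ∑ r ∈ t j, w j r = 1) :
    ∑ p ∈ Fintype.piFinset t, (∏ j, w j (p j)) = 1 := by
  rw [← Finset.prod_univ_sum]
  simp [hw1]

end Marg
end PWAux
namespace PWAux
set_option linter.unusedSectionVars false
section Discrete

variable {n : ℕ} [NeZero n]

lemma prod_shift (σ : ZMod n → ℝ) : ∏ i : ZMod n, σ (i + 1) = ∏ i : ZMod n, σ i :=
  Fintype.prod_equiv (Equiv.addRight (1 : ZMod n)) _ _ (fun _ => rfl)

lemma prod_sq_one (σ : ZMod n → ℝ) (hσ : ∀ j, σ j = 1 ∨ σ j = -1) :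
    (∏ i : ZMod n, σ i) * (∏ i : ZMod n, σ i) = 1 := by
  rw [← Finset.prod_mul_distrib]
  rw [Finset.prod_congr rfl (fun j _ => show σ j * σ j = 1 by
    rcases hσ j with h | h <;> rw [h] <;> norm_num)]
  exact Finset.prod_const_one

lemma exists_neg_of_prod_ne_one (η : ZMod n → ℝ) (hη : ∀ i, η i = 1 ∨ η i = -1)
    (h : ∏ i : ZMod n, η i ≠ 1) : ∃ i, η i = -1 := by
  by_contra hc
  push_neg at hc
  apply h
  rw [Finset.prod_congr rfl (fun i _ => (hη i).resolve_right (hc i))]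
  exact Finset.prod_const_one

lemma pm_mul {x y : ℝ} (hx : x = 1 ∨ x = -1) (hy : y = 1 ∨ y = -1) :
    x * y = 1 ∨ x * y = -1 := by
  rcases hx with h | h <;> rcases hy with h' | h' <;> rw [h, h'] <;> norm_num

lemma ell_nonneg {t : ℝ} (h0t : 0 ≤ t) (i : ZMod n) : 0 ≤ ell n t i := by
  unfold ell; split <;> linarith

lemma ell_le_one {t : ℝ} (ht1 : t ≤ 1) (i : ZMod n) : ell n t i ≤ 1 := by
  unfold ell; split <;> linarith

lemma ell_ge_t {t : ℝ} (ht1 : t ≤ 1) (i : ZMod n) : t ≤ ell n t i := by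
  unfold ell; split <;> linarith

lemma uu_nonneg {a b : ℝ} (h0a : 0 ≤ a) (hab : a ≤ b) (i : ZMod n) : 0 ≤ uu n a b i := by
  unfold uu; split <;> linarith

lemma uu_le_b {a b : ℝ} (hab : a ≤ b) (i : ZMod n) : uu n a b i ≤ b := by
  unfold uu; split <;> linarith

lemma sum_ell (t : ℝ) : ∑ i : ZMod n, ell n t i = (n : ℝ) - 1 + t := by
  unfold ell
  have h : ∀ i : ZMod n, (if i = 0 then t else 1) = 1 + (if i = 0 then t - 1 else 0) := by
    intro i; split <;> ring
  rw [Finset.sum_congr rfl (fun i _ => h i), Finset.sum_add_distrib]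
  rw [Finset.sum_ite_eq' Finset.univ (0 : ZMod n) (fun _ => t - 1)]
  simp only [Finset.sum_const, Finset.card_univ, nsmul_eq_mul, mul_one,
    Finset.mem_univ, if_true]
  rw [ZMod.card]
  ring

/-- vertex values -/
noncomputable def Av (T : ZMod n → Bool) (σ : ZMod n → ℝ) (j : ZMod n) : ℝ :=
  if T j then 0 else σ j
noncomputable def Bv (T : ZMod n → Bool) (σ : ZMod n → ℝ) (j : ZMod n) : ℝ :=
  if T j then σ j else 0

theorem discrete (a b t : ℝ) (h0a : 0 ≤ a) (hab : a ≤ b) (hb1 : b ≤ 1)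
    (h0t : 0 ≤ t) (ht1 : t ≤ 1) (T : ZMod n → Bool) (σ : ZMod n → ℝ)
    (hσ : ∀ j, σ j = 1 ∨ σ j = -1) (c : ZMod n → ZMod n) :
    ∑ i : ZMod n, ell n t i * gam n i *
        (Av T σ i * Av T σ (i + 1) + ww n a b (c i) * (Bv T σ i * Bv T σ (i + 1)))
      ≤ max ((n : ℝ) - 1 - t) (t * a + ((n : ℝ) - 1) * b) := by
  classical
  have hL : ∑ i : ZMod n, ell n t i = (n : ℝ) - 1 + t := sum_ell t
  by_cases hall : ∀ j, T j = false
  · -- all α-type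
    have hterm : ∀ i : ZMod n, ell n t i * gam n i *
        (Av T σ i * Av T σ (i + 1) + ww n a b (c i) * (Bv T σ i * Bv T σ (i + 1)))
        = ell n t i * (gam n i * (σ i * σ (i + 1))) := by
      intro i
      unfold Av Bv
      rw [hall i, hall (i + 1)]
      simp only [Bool.false_eq_true, if_false]
      ring
    rw [Finset.sum_congr rfl (fun i _ => hterm i)]
    have hηc : ∀ i : ZMod n, gam n i * (σ i * σ (i + 1)) = 1
        ∨ gam n i * (σ i * σ (i + 1)) = -1 :=
      fun i => pm_mul (gam_cases i) (pm_mul (hσ i) (hσ (i + 1)))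
    have hprod : ∏ i : ZMod n, gam n i * (σ i * σ (i + 1)) = -1 := by
      rw [Finset.prod_mul_distrib, Finset.prod_mul_distrib, prod_shift σ,
        prod_sq_one σ hσ, prod_gam]
      ring
    obtain ⟨i₀, hi₀⟩ := exists_neg_of_prod_ne_one _ hηc (by rw [hprod]; norm_num)
    rw [← Finset.add_sum_erase _ _ (Finset.mem_univ i₀), hi₀]
    have hbd : ∑ i ∈ Finset.univ.erase i₀, ell n t i * (gam n i * (σ i * σ (i + 1)))
        ≤ ∑ i ∈ Finset.univ.erase i₀, ell n t i := by
      refine Finset.sum_le_sum fun i _ => ?_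
      have h1 := ell_nonneg h0t i
      rcases hηc i with h | h <;> rw [h] <;> nlinarith
    have herase : ∑ i ∈ Finset.univ.erase i₀, ell n t i
        = ((n : ℝ) - 1 + t) - ell n t i₀ := by
      have := Finset.add_sum_erase Finset.univ (ell n t) (Finset.mem_univ i₀)
      rw [hL] at this; linarith
    rw [herase] at hbd
    have h2 := ell_ge_t ht1 i₀
    refine le_trans ?_ (le_max_left _ _)
    nlinarith
  · by_cases hallB : ∀ j, T j = true
    · -- all β-type
      have hterm : ∀ i : ZMod n, ell n t i * gam n i *
          (Av T σ i * Av T σ (i + 1) + ww n a b (c i) * (Bv T σ i * Bv T σ (i + 1)))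
          = ell n t i * ((gam n i * (gam n (c i) * (σ i * σ (i + 1)))) * uu n a b (c i)) := by
        intro i
        unfold Av Bv ww
        rw [hallB i, hallB (i + 1)]
        simp only [if_true]
        ring
      rw [Finset.sum_congr rfl (fun i _ => hterm i)]
      have hηc : ∀ i : ZMod n, gam n i * (gam n (c i) * (σ i * σ (i + 1))) = 1
          ∨ gam n i * (gam n (c i) * (σ i * σ (i + 1))) = -1 :=
        fun i => pm_mul (gam_cases i) (pm_mul (gam_cases (c i)) (pm_mul (hσ i) (hσ (i + 1))))
      by_cases hflip : ∀ i : ZMod n, gam n i * (gam n (c i) * (σ i * σ (i + 1))) = 1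
      · -- all aligned: some c i = 0
        have hprodγc : ∏ i : ZMod n, gam n (c i) = -1 := by
          have h1 : ∏ i : ZMod n, gam n i * (gam n (c i) * (σ i * σ (i + 1))) = 1 := by
            rw [Finset.prod_congr rfl (fun i _ => hflip i)]; exact Finset.prod_const_one
          rw [Finset.prod_mul_distrib, Finset.prod_mul_distrib, Finset.prod_mul_distrib,
            prod_shift σ, prod_sq_one σ hσ, prod_gam] at h1
          nlinarith [h1]
        obtain ⟨i₁, hi₁⟩ := exists_neg_of_prod_ne_one (fun i => gam n (c i))
          (fun i => gam_cases (c i)) (by rw [hprodγc]; norm_num)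
        have hci : c i₁ = 0 := (gam_eq_neg_one_iff (c i₁)).mp hi₁
        have huc : uu n a b (c i₁) = a := by rw [hci]; unfold uu; simp
        rw [Finset.sum_congr rfl (fun i _ => by rw [hflip i, one_mul])]
        rw [← Finset.add_sum_erase _ _ (Finset.mem_univ i₁), huc]
        have hbd : ∑ i ∈ Finset.univ.erase i₁, ell n t i * uu n a b (c i)
            ≤ ∑ i ∈ Finset.univ.erase i₁, ell n t i * b := by
          refine Finset.sum_le_sum fun i _ => ?_
          exact mul_le_mul_of_nonneg_left (uu_le_b hab (c i)) (ell_nonneg h0t i)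
        rw [← Finset.sum_mul] at hbd
        have herase : ∑ i ∈ Finset.univ.erase i₁, ell n t i
            = ((n : ℝ) - 1 + t) - ell n t i₁ := by
          have := Finset.add_sum_erase Finset.univ (ell n t) (Finset.mem_univ i₁)
          rw [hL] at this; linarith
        rw [herase] at hbd
        have h2 := ell_ge_t ht1 i₁
        refine le_trans ?_ (le_max_right _ _)
        nlinarith
      · -- some flip
        push_neg at hflip
        obtain ⟨i₀, hi₀'⟩ := hflip
        have hi₀ : gam n i₀ * (gam n (c i₀) * (σ i₀ * σ (i₀ + 1))) = -1 :=
          (hηc i₀).resolve_left hi₀'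
        rw [← Finset.add_sum_erase _ _ (Finset.mem_univ i₀), hi₀]
        have hbd : ∑ i ∈ Finset.univ.erase i₀,
            ell n t i * ((gam n i * (gam n (c i) * (σ i * σ (i + 1)))) * uu n a b (c i))
            ≤ ∑ i ∈ Finset.univ.erase i₀, ell n t i * b := by
          refine Finset.sum_le_sum fun i _ => ?_
          have h1 := ell_nonneg h0t i
          have h2 := uu_le_b hab (c i)
          have h3 := uu_nonneg h0a hab (c i)
          rcases hηc i with h | h <;> rw [h] <;> nlinarith
        rw [← Finset.sum_mul] at hbd
        have herase : ∑ i ∈ Finset.univ.erase i₀, ell n t i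
            = ((n : ℝ) - 1 + t) - ell n t i₀ := by
          have := Finset.add_sum_erase Finset.univ (ell n t) (Finset.mem_univ i₀)
          rw [hL] at this; linarith
        rw [herase] at hbd
        have h2 := ell_ge_t ht1 i₀
        have h3 := uu_nonneg h0a hab (c i₀)
        have h4 := ell_nonneg h0t i₀
        have hb0 : 0 ≤ b := le_trans h0a hab
        refine le_trans ?_ (le_max_right _ _)
        nlinarith
    · -- mixed case
      push_neg at hall hallB
      obtain ⟨jB, hjB⟩ := hallB
      obtain ⟨jA, hjA⟩ := hall
      have hjB' : T jB = false := by simpa using hjB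
      have hjA' : T jA = true := by simpa using hjA
      have hfall : ∃ j, T j = true ∧ T (j + 1) = false := by
        by_contra hc
        push_neg at hc
        have hstep : ∀ j, T j = true → T (j + 1) = true := by
          intro j hj
          have := hc j hj
          simpa using this
        have := cyc (fun j => T j = true) hstep hjA' jB
        rw [hjB'] at this; simp at this
      have hrise : ∃ j, T j = false ∧ T (j + 1) = true := by
        by_contra hc
        push_neg at hc
        have hstep : ∀ j, T j = false → T (j + 1) = false := by
          intro j hj
          have := hc j hj
          simpa using this
        have := cyc (fun j => T j = false) hstep hjB' jA
        rw [hjA'] at this; simp at this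
      obtain ⟨j₁, hj₁a, hj₁b⟩ := hfall
      obtain ⟨j₂, hj₂a, hj₂b⟩ := hrise
      have hne : j₂ ≠ j₁ := by
        intro h; rw [h, hj₁a] at hj₂a; simp at hj₂a
      have htermbd : ∀ i : ZMod n, ell n t i * gam n i *
          (Av T σ i * Av T σ (i + 1) + ww n a b (c i) * (Bv T σ i * Bv T σ (i + 1)))
          ≤ ell n t i := by
        intro i
        have hl0 := ell_nonneg h0t i
        have hu1 := uu_nonneg h0a hab (c i)
        have hu2 := uu_le_b hab (c i)
        unfold Av Bv ww
        cases h1 : T i <;> cases h2 : T (i + 1) <;>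
          simp only [if_true, if_false, Bool.false_eq_true]
        · -- both A
          have hpm := pm_mul (gam_cases (n := n) i) (pm_mul (hσ i) (hσ (i + 1)))
          have : ell n t i * gam n i * (σ i * σ (i + 1) + gam n (c i) * uu n a b (c i) * (0 * 0))
              = ell n t i * (gam n i * (σ i * σ (i + 1))) := by ring
          rw [this]
          rcases hpm with h | h <;> rw [h] <;> linarith
        · -- A then B
          have : ell n t i * gam n i * (σ i * 0 + gam n (c i) * uu n a b (c i) * (0 * σ (i + 1)))
              = 0 := by ring
          rw [this]; exact hl0
        · -- B then A
          have : ell n t i * gam n i * (0 * σ (i + 1) + gam n (c i) * uu n a b (c i) * (σ i * 0))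
              = 0 := by ring
          rw [this]; exact hl0
        · -- both B
          have hpm := pm_mul (gam_cases (n := n) i)
            (pm_mul (gam_cases (n := n) (c i)) (pm_mul (hσ i) (hσ (i + 1))))
          have heq : ell n t i * gam n i *
              (0 * 0 + gam n (c i) * uu n a b (c i) * (σ i * σ (i + 1)))
              = ell n t i * ((gam n i * (gam n (c i) * (σ i * σ (i + 1)))) * uu n a b (c i)) := by
            ring
          rw [heq]
          rcases hpm with h | h <;> rw [h] <;> nlinarith
      have hz1 : ell n t j₁ * gam n j₁ *
          (Av T σ j₁ * Av T σ (j₁ + 1) + ww n a b (c j₁) * (Bv T σ j₁ * Bv T σ (j₁ + 1))) = 0 := by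
        unfold Av Bv
        rw [hj₁a, hj₁b]
        simp only [if_true, if_false, Bool.false_eq_true]
        ring
      have hz2 : ell n t j₂ * gam n j₂ *
          (Av T σ j₂ * Av T σ (j₂ + 1) + ww n a b (c j₂) * (Bv T σ j₂ * Bv T σ (j₂ + 1))) = 0 := by
        unfold Av Bv
        rw [hj₂a, hj₂b]
        simp only [if_true, if_false, Bool.false_eq_true]
        ring
      rw [← Finset.add_sum_erase _ _ (Finset.mem_univ j₁), hz1, zero_add,
        ← Finset.add_sum_erase _ _ (Finset.mem_erase.mpr ⟨hne, Finset.mem_univ j₂⟩), hz2,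
        zero_add]
      have hbd : ∑ i ∈ (Finset.univ.erase j₁).erase j₂, ell n t i * gam n i *
          (Av T σ i * Av T σ (i + 1) + ww n a b (c i) * (Bv T σ i * Bv T σ (i + 1)))
          ≤ ∑ i ∈ (Finset.univ.erase j₁).erase j₂, ell n t i :=
        Finset.sum_le_sum fun i _ => htermbd i
      have herase2 : ∑ i ∈ (Finset.univ.erase j₁).erase j₂, ell n t i
          = ((n : ℝ) - 1 + t) - ell n t j₁ - ell n t j₂ := by
        have e1 := Finset.add_sum_erase Finset.univ (ell n t) (Finset.mem_univ j₁)
        have e2 := Finset.add_sum_erase (Finset.univ.erase j₁) (ell n t)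
          (Finset.mem_erase.mpr ⟨hne, Finset.mem_univ j₂⟩)
        rw [hL] at e1; linarith
      rw [herase2] at hbd
      have ht₁ := ell_ge_t ht1 j₁
      have ht₂ := ell_ge_t ht1 j₂
      refine le_trans ?_ (le_max_left _ _)
      linarith

end Discrete
end PWAux
namespace PWAux
set_option linter.unusedSectionVars false
section ContFI

variable {n : ℕ} [NeZero n]

/-- vertex weights on the cross-polytope `|A| + |B| ≤ 1` -/
noncomputable def ωf (A B : ℝ) (v : Bool × Bool) : ℝ :=
  if v.1 then (|B| + sval v.2 * B) / 2 + (1 - |A| - |B|) / 2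
  else (|A| + sval v.2 * A) / 2

noncomputable def vav (v : Bool × Bool) : ℝ := if v.1 then 0 else sval v.2
noncomputable def vbv (v : Bool × Bool) : ℝ := if v.1 then sval v.2 else 0

lemma ωf_nonneg {A B : ℝ} (h : |A| + |B| ≤ 1) (v : Bool × Bool) : 0 ≤ ωf A B v := by
  have h1 : -A ≤ |A| := neg_le_abs A
  have h2 : A ≤ |A| := le_abs_self A
  have h3 : -B ≤ |B| := neg_le_abs B
  have h4 : B ≤ |B| := le_abs_self B
  unfold ωf
  obtain ⟨vt, vs⟩ := v
  cases vt <;> cases vs <;> simp only [sval] <;> norm_num <;> linarith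

lemma ωf_sum (A B : ℝ) : ∑ v : Bool × Bool, ωf A B v = 1 := by
  rw [Fintype.sum_prod_type]
  simp only [Fintype.sum_bool, ωf, sval]
  norm_num
  ring

lemma edge_expand (A1 B1 A2 B2 w : ℝ) :
    A1 * A2 + w * (B1 * B2)
      = ∑ v : Bool × Bool, ∑ v' : Bool × Bool,
          ωf A1 B1 v * ωf A2 B2 v' * (vav v * vav v' + w * (vbv v * vbv v')) := by
  rw [Fintype.sum_prod_type]
  simp only [Fintype.sum_bool, Fintype.sum_prod_type, ωf, vav, vbv, sval]
  norm_num
  ring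

/-- generic coefficient swap -/
lemma swap_coeff {α β : Type*} (s : Finset α) (u : Finset β)
    (cc : α → ℝ) (d : β → ℝ) (F : α → β → ℝ) :
    ∑ x ∈ s, cc x * ∑ y ∈ u, d y * F x y = ∑ y ∈ u, d y * ∑ x ∈ s, cc x * F x y := by
  simp only [Finset.mul_sum]
  rw [Finset.sum_comm]
  exact Finset.sum_congr rfl fun y _ => Finset.sum_congr rfl fun x _ => by ring

theorem contFI (hn : 3 ≤ n) (a b t : ℝ) (h0a : 0 ≤ a) (hab : a ≤ b) (hb1 : b ≤ 1)
    (h0t : 0 ≤ t) (ht1 : t ≤ 1) (A B : ZMod n → ℝ) (hAB : ∀ j, |A j| + |B j| ≤ 1)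
    (c : ZMod n → ZMod n) :
    ∑ i : ZMod n, ell n t i * gam n i *
        (A i * A (i + 1) + ww n a b (c i) * (B i * B (i + 1)))
      ≤ max ((n : ℝ) - 1 - t) (t * a + ((n : ℝ) - 1) * b) := by
  classical
  have hmarg : ∀ i : ZMod n,
      A i * A (i + 1) + ww n a b (c i) * (B i * B (i + 1))
        = ∑ p ∈ Fintype.piFinset (fun _ : ZMod n => (Finset.univ : Finset (Bool × Bool))),
            (∏ j, ωf (A j) (B j) (p j)) *
              (vav (p i) * vav (p (i + 1)) + ww n a b (c i) * (vbv (p i) * vbv (p (i + 1)))) := by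
    intro i
    rw [marg (fun _ => (Finset.univ : Finset (Bool × Bool))) (fun j => ωf (A j) (B j))
      (fun j => ωf_sum (A j) (B j)) (Ne.symm (succ_ne hn i))
      (fun v v' => vav v * vav v' + ww n a b (c i) * (vbv v * vbv v'))]
    exact edge_expand (A i) (B i) (A (i + 1)) (B (i + 1)) (ww n a b (c i))
  have h1 : ∑ i : ZMod n, ell n t i * gam n i *
      (A i * A (i + 1) + ww n a b (c i) * (B i * B (i + 1)))
      = ∑ i : ZMod n, ell n t i * gam n i *
          ∑ p ∈ Fintype.piFinset (fun _ : ZMod n => (Finset.univ : Finset (Bool × Bool))),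
            (∏ j, ωf (A j) (B j) (p j)) *
              (vav (p i) * vav (p (i + 1)) + ww n a b (c i) * (vbv (p i) * vbv (p (i + 1)))) :=
    Finset.sum_congr rfl fun i _ => by rw [hmarg i]
  rw [h1, swap_coeff Finset.univ
    (Fintype.piFinset (fun _ : ZMod n => (Finset.univ : Finset (Bool × Bool))))
    (fun i => ell n t i * gam n i) (fun p => ∏ j, ωf (A j) (B j) (p j))
    (fun i p => vav (p i) * vav (p (i + 1)) + ww n a b (c i) * (vbv (p i) * vbv (p (i + 1))))]
  have hQ0 : ∀ p ∈ Fintype.piFinset (fun _ : ZMod n => (Finset.univ : Finset (Bool × Bool))),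
      (0:ℝ) ≤ ∏ j, ωf (A j) (B j) (p j) :=
    fun p _ => Finset.prod_nonneg fun j _ => ωf_nonneg (hAB j) _
  have hQ1 : ∑ p ∈ Fintype.piFinset (fun _ : ZMod n => (Finset.univ : Finset (Bool × Bool))),
      (∏ j, ωf (A j) (B j) (p j)) = 1 :=
    sum_piFinset_prod_eq_one _ _ (fun j => ωf_sum (A j) (B j))
  have hinner : ∀ p ∈ Fintype.piFinset (fun _ : ZMod n => (Finset.univ : Finset (Bool × Bool))),
      ∑ i : ZMod n, ell n t i * gam n i *
          (vav (p i) * vav (p (i + 1)) + ww n a b (c i) * (vbv (p i) * vbv (p (i + 1))))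
        ≤ max ((n : ℝ) - 1 - t) (t * a + ((n : ℝ) - 1) * b) := by
    intro p _
    exact discrete a b t h0a hab hb1 h0t ht1 (fun j => (p j).1) (fun j => sval (p j).2)
      (fun j => sval_cases _) c
  calc ∑ p ∈ Fintype.piFinset (fun _ : ZMod n => (Finset.univ : Finset (Bool × Bool))),
        (∏ j, ωf (A j) (B j) (p j)) *
          ∑ i : ZMod n, ell n t i * gam n i *
            (vav (p i) * vav (p (i + 1)) + ww n a b (c i) * (vbv (p i) * vbv (p (i + 1))))
      ≤ ∑ p ∈ Fintype.piFinset (fun _ : ZMod n => (Finset.univ : Finset (Bool × Bool))),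
          (∏ j, ωf (A j) (B j) (p j)) *
            max ((n : ℝ) - 1 - t) (t * a + ((n : ℝ) - 1) * b) :=
        Finset.sum_le_sum fun p hp =>
          mul_le_mul_of_nonneg_left (hinner p hp) (hQ0 p hp)
    _ = max ((n : ℝ) - 1 - t) (t * a + ((n : ℝ) - 1) * b) := by
        rw [← Finset.sum_mul, hQ1, one_mul]

end ContFI
end PWAux
namespace PWAux
set_option linter.unusedSectionVars false
section Cert

variable {n : ℕ} [NeZero n]

noncomputable def μf (W : NCWiring n) (l : ℕ) (j : ZMod n) (r : ℕ) (s : Bool) : ℝ :=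
  W.m j r s l true - W.m j r s l false

noncomputable def αf (W : NCWiring n) (l : ℕ) (j : ZMod n) (r : ℕ) : ℝ :=
  (μf W l j r false + μf W l j r true) / 2

noncomputable def βf (W : NCWiring n) (l : ℕ) (j : ZMod n) (r : ℕ) : ℝ :=
  (μf W l j r true - μf W l j r false) / 2

lemma habs (W : NCWiring n) (l : ℕ) (j : ZMod n) (r : ℕ) :
    |αf W l j r| + |βf W l j r| ≤ 1 := by
  have hm := fun (s t : Bool) => W.m_nonneg j r s l t
  have hs1 := W.m_sum j r false l
  have hs2 := W.m_sum j r true l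
  rw [Fintype.sum_bool] at hs1 hs2
  rcases abs_cases (αf W l j r) with ⟨hx, _⟩ | ⟨hx, _⟩ <;>
    rcases abs_cases (βf W l j r) with ⟨hy, _⟩ | ⟨hy, _⟩ <;>
    rw [hx, hy] <;> unfold αf βf μf <;>
    linarith [hm false true, hm false false, hm true true, hm true false]

lemma cor_pull {α : Type*} (s : Finset α) (cc : α → ℝ) (F : α → Bool → Bool → ℝ) :
    (∑ t : Bool, ∑ t' : Bool, sval t * sval t' * ∑ x ∈ s, cc x * F x t t')
      = ∑ x ∈ s, cc x * ∑ t : Bool, ∑ t' : Bool, sval t * sval t' * F x t t' := by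
  simp only [Finset.mul_sum]
  calc ∑ t : Bool, ∑ t' : Bool, ∑ x ∈ s, sval t * sval t' * (cc x * F x t t')
      = ∑ t : Bool, ∑ x ∈ s, ∑ t' : Bool, sval t * sval t' * (cc x * F x t t') :=
        Finset.sum_congr rfl fun t _ => Finset.sum_comm
    _ = ∑ x ∈ s, ∑ t : Bool, ∑ t' : Bool, sval t * sval t' * (cc x * F x t t') :=
        Finset.sum_comm
    _ = ∑ x ∈ s, ∑ t : Bool, ∑ t' : Bool, cc x * (sval t * sval t' * F x t t') :=
        Finset.sum_congr rfl fun x _ => Finset.sum_congr rfl fun t _ =>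
          Finset.sum_congr rfl fun t' _ => by ring

lemma inner_id (W : NCWiring n) (a b : ℝ) (l : ℕ) (r r' : ℕ) (j j' : ZMod n) (k : ZMod n) :
    (∑ t : Bool, ∑ t' : Bool, sval t * sval t' *
        ∑ s : Bool, ∑ s' : Bool, Pab n a b k s s' * W.m j r s l t * W.m j' r' s' l t')
      = αf W l j r * αf W l j' r' + ww n a b k * (βf W l j r * βf W l j' r') := by
  unfold Pab αf βf μf
  simp only [Fintype.sum_bool, sval]
  norm_num
  ring

lemma cor_apply (hn : 3 ≤ n) (a b : ℝ) (W : NCWiring n) (i : ZMod n) :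
    cor n (W.apply (Pab n a b)) i
      = ∑ l ∈ W.Λ, W.ρ l * ∑ r ∈ W.R, W.q i l r * ∑ r' ∈ W.R, W.q (i + 1) l r' *
          (αf W l i r * αf W l (i + 1) r'
            + ww n a b (W.g i r r') * (βf W l i r * βf W l (i + 1) r')) := by
  unfold cor NCWiring.apply
  rw [cor_pull W.Λ W.ρ]
  refine Finset.sum_congr rfl fun l _ => ?_
  congr 1
  have hre : ∀ t t' : Bool,
      (∑ r ∈ W.R, ∑ r' ∈ W.R, W.q i l r * W.q (i + 1) l r' *
          ∑ s : Bool, ∑ s' : Bool, Pab n a b (W.g i r r') s s' * W.m i r s l t * W.m (i + 1) r' s' l t')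
        = ∑ r ∈ W.R, W.q i l r * ∑ r' ∈ W.R, W.q (i + 1) l r' *
            ∑ s : Bool, ∑ s' : Bool, Pab n a b (W.g i r r') s s' * W.m i r s l t * W.m (i + 1) r' s' l t' := by
    intro t t'
    refine Finset.sum_congr rfl fun r _ => ?_
    rw [Finset.mul_sum]
    refine Finset.sum_congr rfl fun r' _ => by ring
  rw [Finset.sum_congr rfl (fun t _ => Finset.sum_congr rfl (fun t' _ => by rw [hre t t']))]
  rw [cor_pull W.R (W.q i l)]
  refine Finset.sum_congr rfl fun r _ => ?_
  congr 1
  rw [cor_pull W.R (W.q (i + 1) l)]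
  refine Finset.sum_congr rfl fun r' _ => ?_
  congr 1
  exact inner_id W a b l r r' i (i + 1) (W.g i r r')

theorem cert (hn : 3 ≤ n) (a b t : ℝ) (h0a : 0 ≤ a) (hab : a ≤ b) (hb1 : b ≤ 1)
    (h0t : 0 ≤ t) (ht1 : t ≤ 1) (W : NCWiring n) :
    ∑ i : ZMod n, ell n t i * gam n i * cor n (W.apply (Pab n a b)) i
      ≤ max ((n : ℝ) - 1 - t) (t * a + ((n : ℝ) - 1) * b) := by
  classical
  have h1 : ∑ i : ZMod n, ell n t i * gam n i * cor n (W.apply (Pab n a b)) i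
      = ∑ i : ZMod n, (ell n t i * gam n i) *
          ∑ l ∈ W.Λ, W.ρ l * ∑ r ∈ W.R, W.q i l r * ∑ r' ∈ W.R, W.q (i + 1) l r' *
            (αf W l i r * αf W l (i + 1) r'
              + ww n a b (W.g i r r') * (βf W l i r * βf W l (i + 1) r')) :=
    Finset.sum_congr rfl fun i _ => by rw [cor_apply hn a b W i]
  rw [h1, swap_coeff Finset.univ W.Λ (fun i => ell n t i * gam n i) W.ρ]
  have hbd : ∀ l ∈ W.Λ,
      (∑ i : ZMod n, (ell n t i * gam n i) *
          ∑ r ∈ W.R, W.q i l r * ∑ r' ∈ W.R, W.q (i + 1) l r' *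
            (αf W l i r * αf W l (i + 1) r'
              + ww n a b (W.g i r r') * (βf W l i r * βf W l (i + 1) r')))
        ≤ max ((n : ℝ) - 1 - t) (t * a + ((n : ℝ) - 1) * b) := by
    intro l hl
    have hmarg : ∀ i : ZMod n,
        (∑ r ∈ W.R, W.q i l r * ∑ r' ∈ W.R, W.q (i + 1) l r' *
            (αf W l i r * αf W l (i + 1) r'
              + ww n a b (W.g i r r') * (βf W l i r * βf W l (i + 1) r')))
          = ∑ p ∈ Fintype.piFinset (fun _ : ZMod n => W.R),
              (∏ j, W.q j l (p j)) *
                (αf W l i (p i) * αf W l (i + 1) (p (i + 1))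
                  + ww n a b (W.g i (p i) (p (i + 1)))
                    * (βf W l i (p i) * βf W l (i + 1) (p (i + 1)))) := by
      intro i
      rw [marg (fun _ : ZMod n => W.R) (fun j => W.q j l) (fun j => W.q_sum j l hl)
        (Ne.symm (succ_ne hn i))
        (fun r r' => αf W l i r * αf W l (i + 1) r'
          + ww n a b (W.g i r r') * (βf W l i r * βf W l (i + 1) r'))]
      refine Finset.sum_congr rfl fun r _ => ?_
      rw [Finset.mul_sum]
      refine Finset.sum_congr rfl fun r' _ => by ring
    rw [Finset.sum_congr rfl (fun i _ => by rw [hmarg i])]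
    rw [swap_coeff Finset.univ (Fintype.piFinset (fun _ : ZMod n => W.R))
      (fun i => ell n t i * gam n i) (fun p => ∏ j, W.q j l (p j))]
    have hQ0 : ∀ p ∈ Fintype.piFinset (fun _ : ZMod n => W.R),
        (0:ℝ) ≤ ∏ j, W.q j l (p j) :=
      fun p _ => Finset.prod_nonneg fun j _ => W.q_nonneg j l (p j)
    have hQ1 : ∑ p ∈ Fintype.piFinset (fun _ : ZMod n => W.R),
        (∏ j, W.q j l (p j)) = 1 :=
      sum_piFinset_prod_eq_one _ _ (fun j => W.q_sum j l hl)
    have hinner : ∀ p ∈ Fintype.piFinset (fun _ : ZMod n => W.R),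
        ∑ i : ZMod n, ell n t i * gam n i *
            (αf W l i (p i) * αf W l (i + 1) (p (i + 1))
              + ww n a b (W.g i (p i) (p (i + 1)))
                * (βf W l i (p i) * βf W l (i + 1) (p (i + 1))))
          ≤ max ((n : ℝ) - 1 - t) (t * a + ((n : ℝ) - 1) * b) := by
      intro p _
      exact contFI hn a b t h0a hab hb1 h0t ht1 (fun j => αf W l j (p j))
        (fun j => βf W l j (p j)) (fun j => habs W l j (p j))
        (fun i => W.g i (p i) (p (i + 1)))
    calc ∑ p ∈ Fintype.piFinset (fun _ : ZMod n => W.R),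
          (∏ j, W.q j l (p j)) *
            ∑ i : ZMod n, ell n t i * gam n i *
              (αf W l i (p i) * αf W l (i + 1) (p (i + 1))
                + ww n a b (W.g i (p i) (p (i + 1)))
                  * (βf W l i (p i) * βf W l (i + 1) (p (i + 1))))
        ≤ ∑ p ∈ Fintype.piFinset (fun _ : ZMod n => W.R),
            (∏ j, W.q j l (p j)) * max ((n : ℝ) - 1 - t) (t * a + ((n : ℝ) - 1) * b) :=
          Finset.sum_le_sum fun p hp => mul_le_mul_of_nonneg_left (hinner p hp) (hQ0 p hp)
      _ = max ((n : ℝ) - 1 - t) (t * a + ((n : ℝ) - 1) * b) := by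
          rw [← Finset.sum_mul, hQ1, one_mul]
  calc ∑ l ∈ W.Λ, W.ρ l * ∑ i : ZMod n, (ell n t i * gam n i) *
        ∑ r ∈ W.R, W.q i l r * ∑ r' ∈ W.R, W.q (i + 1) l r' *
          (αf W l i r * αf W l (i + 1) r'
            + ww n a b (W.g i r r') * (βf W l i r * βf W l (i + 1) r'))
      ≤ ∑ l ∈ W.Λ, W.ρ l * max ((n : ℝ) - 1 - t) (t * a + ((n : ℝ) - 1) * b) :=
        Finset.sum_le_sum fun l hl =>
          mul_le_mul_of_nonneg_left (hbd l hl) (W.ρ_nonneg l hl)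
    _ = max ((n : ℝ) - 1 - t) (t * a + ((n : ℝ) - 1) * b) := by
        rw [← Finset.sum_mul, W.ρ_sum, one_mul]

end Cert
end PWAux
namespace PWAux
set_option linter.unusedSectionVars false
section Final

variable {n : ℕ} [NeZero n]

lemma Pab_behavior (a b : ℝ) (h0a : 0 ≤ a) (hab : a ≤ b) (hb1 : b ≤ 1) :
    IsNCycleBehavior n (Pab n a b) := by
  constructor
  · intro i s s'
    unfold Pab ww
    have h1 := uu_nonneg h0a hab i
    have h2 := uu_le_b hab i
    rcases gam_cases (n := n) i with h | h <;> rcases sval_cases s with hs | hs <;>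
      rcases sval_cases s' with hs' | hs' <;> rw [h, hs, hs'] <;> nlinarith
  · intro i
    unfold Pab
    simp [Fintype.sum_bool, sval]
    ring

lemma Pab_nd (a b : ℝ) : NCycleNonDisturbing n (Pab n a b) := by
  intro i s
  unfold Pab
  cases s <;> simp [Fintype.sum_bool, sval] <;> ring

lemma cor_Pab (a b : ℝ) (i : ZMod n) : cor n (Pab n a b) i = ww n a b i := by
  unfold cor Pab
  simp [Fintype.sum_bool, sval]
  ring

lemma Lval (a' b' t : ℝ) :
    ∑ i : ZMod n, ell n t i * gam n i * ww n a' b' i = t * a' + ((n : ℝ) - 1) * b' := by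
  unfold ell ww uu gam
  have h : ∀ i : ZMod n,
      (if i = 0 then t else 1) * (if i = 0 then (-1 : ℝ) else 1) *
        ((if i = 0 then (-1 : ℝ) else 1) * (if i = 0 then a' else b'))
      = b' + (if i = 0 then t * a' - b' else 0) := by
    intro i; split <;> ring
  rw [Finset.sum_congr rfl (fun i _ => h i), Finset.sum_add_distrib,
    Finset.sum_ite_eq' Finset.univ (0 : ZMod n) (fun _ => t * a' - b')]
  simp only [Finset.sum_const, Finset.card_univ, nsmul_eq_mul, mul_one,
    Finset.mem_univ, if_true]
  rw [ZMod.card]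
  ring

end Final
end PWAux
set_option maxHeartbeats 1000000 in
/-- the convertibility pre-order induced by type-preserving
noncontextual wirings on non-disturbing `n`-cycle behaviors has infinite width: there
is an infinite antichain, i.e. an injective family `(B_x)_{x ∈ [1/2, 1]}` of
non-disturbing behaviors that are pairwise incomparable. -/
theorem preorder_infinite_width (n : ℕ) [NeZero n] (hn : 3 ≤ n) :
    ∃ Bfam : ℝ → (ZMod n → Bool → Bool → ℝ),
      (∀ x ∈ Set.Icc (1/2 : ℝ) 1,
        IsNCycleBehavior n (Bfam x) ∧ NCycleNonDisturbing n (Bfam x)) ∧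
      Set.InjOn Bfam (Set.Icc (1/2 : ℝ) 1) ∧
      (∀ x ∈ Set.Icc (1/2 : ℝ) 1, ∀ y ∈ Set.Icc (1/2 : ℝ) 1, x ≠ y →
        ¬ NCConvertsTo n (Bfam x) (Bfam y) ∧ ¬ NCConvertsTo n (Bfam y) (Bfam x)) := by
  classical
  have hN : (3 : ℝ) ≤ (n : ℝ) := by exact_mod_cast hn
  have hN0 : (0 : ℝ) < (n : ℝ) := by linarith
  have hN1 : (0 : ℝ) < (n : ℝ) + 1 := by linarith
  have hNne : (n : ℝ) ≠ 0 := ne_of_gt hN0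
  have hN1ne : (n : ℝ) + 1 ≠ 0 := ne_of_gt hN1
  have hD0 : (0 : ℝ) < 2 * (n : ℝ) * ((n : ℝ) + 1) := by nlinarith
  have hDne : 2 * (n : ℝ) * ((n : ℝ) + 1) ≠ 0 := ne_of_gt hD0
  set af : ℝ → ℝ := fun z =>
    (2 * (n : ℝ) * ((n : ℝ) + 1) - 2 * ((n : ℝ) + 1) + (n : ℝ) * z)
      / (2 * (n : ℝ) * ((n : ℝ) + 1)) with haf
  set bf : ℝ → ℝ := fun z =>
    (2 * (n : ℝ) * ((n : ℝ) + 1) - z) / (2 * (n : ℝ) * ((n : ℝ) + 1)) with hbf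
  have h0a : ∀ z : ℝ, 0 ≤ z → 0 ≤ af z := by
    intro z hz
    apply div_nonneg _ (le_of_lt hD0)
    nlinarith
  have hab : ∀ z : ℝ, z ≤ 1 → af z ≤ bf z := by
    intro z hz
    rw [haf, hbf]
    rw [div_le_div_iff₀ hD0 hD0]
    nlinarith [mul_nonneg (le_of_lt hD0) (mul_nonneg (le_of_lt hN1)
      (by linarith : (0:ℝ) ≤ 2 - z))]
  have hb1 : ∀ z : ℝ, 0 ≤ z → bf z ≤ 1 := by
    intro z hz
    rw [hbf, div_le_one hD0]
    nlinarith
  refine ⟨fun x => PWAux.Pab n (af x) (bf x), ?_, ?_, ?_⟩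
  · intro x hx
    obtain ⟨hx1, hx2⟩ := hx
    have hx0 : (0:ℝ) ≤ x := by linarith
    exact ⟨PWAux.Pab_behavior (af x) (bf x) (h0a x hx0) (hab x hx2) (hb1 x hx0),
      PWAux.Pab_nd (af x) (bf x)⟩
  · -- injectivity
    intro x hx y hy h
    have h1 : PWAux.Pab n (af x) (bf x) 1 true true
        = PWAux.Pab n (af y) (bf y) 1 true true :=
      congrFun (congrFun (congrFun h (1 : ZMod n)) true) true
    have hone := PWAux.one_ne_zero' (n := n) hn
    have hww : ∀ a b : ℝ, PWAux.ww n a b 1 = b := by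
      intro a b
      unfold PWAux.ww PWAux.gam PWAux.uu
      rw [if_neg hone, if_neg hone]
      ring
    unfold PWAux.Pab at h1
    rw [hww, hww] at h1
    have hsv : sval true = 1 := by simp [sval]
    rw [hsv] at h1
    have h2 : bf x = bf y := by
      field_simp at h1
      linarith
    rw [hbf] at h2
    have h3 := (div_eq_div_iff hDne hDne).mp h2
    have := mul_right_cancel₀ hDne h3
    linarith
  · -- incomparability
    have key : ∀ x ∈ Set.Icc (1/2 : ℝ) 1, ∀ y ∈ Set.Icc (1/2 : ℝ) 1, x < y →
        ¬ NCConvertsTo n (PWAux.Pab n (af x) (bf x)) (PWAux.Pab n (af y) (bf y)) ∧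
        ¬ NCConvertsTo n (PWAux.Pab n (af y) (bf y)) (PWAux.Pab n (af x) (bf x)) := by
      intro x hx y hy hlt
      obtain ⟨hx1, hx2⟩ := hx
      obtain ⟨hy1, hy2⟩ := hy
      have hx0 : (0:ℝ) ≤ x := by linarith
      have hy0 : (0:ℝ) ≤ y := by linarith
      constructor
      · -- x → y blocked by Ω-certificate (t = 1)
        rintro ⟨W, hW⟩
        have hcert := PWAux.cert (n := n) hn (af x) (bf x) 1 (h0a x hx0) (hab x hx2)
          (hb1 x hx0) zero_le_one le_rfl W
        rw [hW] at hcert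
        have hval : ∑ i : ZMod n, PWAux.ell n 1 i * PWAux.gam n i *
            PWAux.cor n (PWAux.Pab n (af y) (bf y)) i
            = 1 * af y + ((n : ℝ) - 1) * bf y := by
          rw [Finset.sum_congr rfl
            (fun i _ => by rw [PWAux.cor_Pab (n := n) (af y) (bf y) i])]
          exact PWAux.Lval (af y) (bf y) 1
        rw [hval] at hcert
        have hd1 : (1 * af y + ((n : ℝ) - 1) * bf y) - ((n : ℝ) - 1 - 1)
            = (4 * (n:ℝ)^2 + 2 * (n:ℝ) - 2 + y) / (2 * (n : ℝ) * ((n : ℝ) + 1)) := by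
          rw [haf, hbf]
          field_simp
          ring
        have hd2 : (1 * af y + ((n : ℝ) - 1) * bf y) - (1 * af x + ((n : ℝ) - 1) * bf x)
            = (y - x) / (2 * (n : ℝ) * ((n : ℝ) + 1)) := by
          rw [haf, hbf]
          field_simp
          ring
        have hp1 : (0:ℝ) < 4 * (n:ℝ)^2 + 2 * (n:ℝ) - 2 + y := by nlinarith
        have hp2 : (0:ℝ) < y - x := by linarith
        have h1 := div_pos hp1 hD0
        have h2 := div_pos hp2 hD0
        have hmax : max ((n : ℝ) - 1 - 1) (1 * af x + ((n : ℝ) - 1) * bf x)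
            < 1 * af y + ((n : ℝ) - 1) * bf y := by
          apply max_lt <;> linarith
        linarith
      · -- y → x blocked by the t = (2n-3)/(2n) certificate
        rintro ⟨W, hW⟩
        set t : ℝ := (2 * (n : ℝ) - 3) / (2 * (n : ℝ)) with htdef
        have h2N : (0:ℝ) < 2 * (n : ℝ) := by linarith
        have h0t : 0 ≤ t := div_nonneg (by linarith) (by linarith)
        have ht1 : t ≤ 1 := by
          rw [htdef, div_le_one h2N]
          linarith
        have hcert := PWAux.cert (n := n) hn (af y) (bf y) t (h0a y hy0) (hab y hy2)
          (hb1 y hy0) h0t ht1 W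
        rw [hW] at hcert
        have hval : ∑ i : ZMod n, PWAux.ell n t i * PWAux.gam n i *
            PWAux.cor n (PWAux.Pab n (af x) (bf x)) i
            = t * af x + ((n : ℝ) - 1) * bf x := by
          rw [Finset.sum_congr rfl
            (fun i _ => by rw [PWAux.cor_Pab (n := n) (af x) (bf x) i])]
          exact PWAux.Lval (af x) (bf x) t
        rw [hval] at hcert
        have hd3 : (t * af x + ((n : ℝ) - 1) * bf x) - ((n : ℝ) - 1 - t)
            = (8 * (n:ℝ)^3 - 8 * (n:ℝ)^2 - 10 * (n:ℝ) + 6 - (n:ℝ) * x)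
              / (4 * (n:ℝ)^2 * ((n:ℝ) + 1)) := by
          rw [htdef, haf, hbf]
          field_simp
          ring
        have hd4 : (t * af x + ((n : ℝ) - 1) * bf x) - (t * af y + ((n : ℝ) - 1) * bf y)
            = (y - x) / (4 * (n:ℝ) * ((n:ℝ) + 1)) := by
          rw [htdef, haf, hbf]
          field_simp
          ring
        have hp3 : (0:ℝ) < 8 * (n:ℝ)^3 - 8 * (n:ℝ)^2 - 10 * (n:ℝ) + 6 - (n:ℝ) * x := by
          nlinarith [mul_nonneg (sub_nonneg.mpr hN) (sq_nonneg ((n:ℝ) - 1)),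
            mul_nonneg (sub_nonneg.mpr hN) hN0.le]
        have hp4 : (0:ℝ) < y - x := by linarith
        have hden3 : (0:ℝ) < 4 * (n:ℝ)^2 * ((n:ℝ) + 1) := by nlinarith
        have hden4 : (0:ℝ) < 4 * (n:ℝ) * ((n:ℝ) + 1) := by nlinarith
        have h3 := div_pos hp3 hden3
        have h4 := div_pos hp4 hden4
        have hmax : max ((n : ℝ) - 1 - t) (t * af y + ((n : ℝ) - 1) * bf y)
            < t * af x + ((n : ℝ) - 1) * bf x := by
          apply max_lt <;> linarith
        linarith
    intro x hx y hy hxy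
    rcases lt_or_gt_of_ne hxy with h | h
    · exact key x hx y hy h
    · obtain ⟨k1, k2⟩ := key y hy x hx h
      exact ⟨k2, k1⟩
end
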